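/- arXiv:2105.07997 — 5 statements merged into one kernel-verified Lean document; each statement's English description precedes it below -/
import Mathlib

section
/- Let C₁ and C₂ be xy-monotone edge-connected configurations of n squares each whose bounding boxes have the same bottom-left corner, let P and P' denote the perimeters of their respective bounding boxes, and let P̄ = max{P, P'}. Then there is an absolute constant c and a reconfiguration sequence of at most c · P̄ · n moves transforming C₁ into C₂, maintaining edge-connectivity at all times. -/
/-! Basic notions for sliding-square reconfiguration. -/

abbrev Cell : Type := ℤ × ℤ

/-- Two cells differing by exactly 1 in exactly one coordinate. -/
def EdgeAdj (a b : Cell) : Prop := |a.1 - b.1| + |a.2 - b.2| = 1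

/-- Two distinct cells differing by at most 1 in each coordinate. -/
def VertexAdj (a b : Cell) : Prop := a ≠ b ∧ |a.1 - b.1| ≤ 1 ∧ |a.2 - b.2| ≤ 1

/-- Reachability inside a configuration via edge-adjacency. -/
def Reach (C : Finset Cell) (a b : Cell) : Prop :=
  Relation.ReflTransGen (fun u v => u ∈ C ∧ v ∈ C ∧ EdgeAdj u v) a b

/-- A configuration (finite nonempty set of cells) is edge-connected. -/
def EdgeConnected (C : Finset Cell) : Prop :=
  C.Nonempty ∧ ∀ a ∈ C, ∀ b ∈ C, Reach C a b

/-- Edge-connectivity for arbitrary sets of cells. -/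
def SetEdgeConnected (S : Set Cell) : Prop :=
  S.Nonempty ∧ ∀ a ∈ S, ∀ b ∈ S,
    Relation.ReflTransGen (fun u v => u ∈ S ∧ v ∈ S ∧ EdgeAdj u v) a b

def IsUnitVec (d : Cell) : Prop := d = (1, 0) ∨ d = (-1, 0) ∨ d = (0, 1) ∨ d = (0, -1)

def Orth (d e : Cell) : Prop := d.1 * e.1 + d.2 * e.2 = 0

/-- A slide move of a square from `c` to `c'`. -/
def SlideMove (C : Finset Cell) (c c' : Cell) : Prop :=
  c ∈ C ∧ c' ∉ C ∧ ∃ d, IsUnitVec d ∧ c' = c + d ∧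
    ∃ e, IsUnitVec e ∧ Orth d e ∧ c + e ∈ C ∧ c + d + e ∈ C

/-- A convex transition of a square from `c` to `c'`. -/
def ConvexMove (C : Finset Cell) (c c' : Cell) : Prop :=
  c ∈ C ∧ c' ∉ C ∧ ∃ d e, IsUnitVec d ∧ IsUnitVec e ∧ Orth d e ∧
    c' = c + d + e ∧ Xor' (c + d ∈ C) (c + e ∈ C)

/-- The configuration resulting from moving the square at `c` to `c'`. -/
def ApplyMove (C : Finset Cell) (c c' : Cell) : Finset Cell := insert c' (C.erase c)

/-- One move (slide or convex transition). -/
def MoveStep (C C' : Finset Cell) : Prop :=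
  ∃ c c', (SlideMove C c c' ∨ ConvexMove C c c') ∧ C' = ApplyMove C c c'

/-- A reconfiguration sequence of `k` moves: every configuration is edge-connected. -/
def ReconfigSeq (k : ℕ) (f : ℕ → Finset Cell) : Prop :=
  (∀ i < k, MoveStep (f i) (f (i + 1))) ∧ ∀ i ≤ k, EdgeConnected (f i)

noncomputable def minX (C : Finset Cell) : ℤ := sInf (Prod.fst '' (C : Set Cell))
noncomputable def maxX (C : Finset Cell) : ℤ := sSup (Prod.fst '' (C : Set Cell))
noncomputable def minY (C : Finset Cell) : ℤ := sInf (Prod.snd '' (C : Set Cell))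
noncomputable def maxY (C : Finset Cell) : ℤ := sSup (Prod.snd '' (C : Set Cell))

/-- Number of columns of the bounding box. -/
noncomputable def bwidth (C : Finset Cell) : ℕ := (maxX C - minX C + 1).toNat
/-- Number of rows of the bounding box. -/
noncomputable def bheight (C : Finset Cell) : ℕ := (maxY C - minY C + 1).toNat
/-- Perimeter of the bounding box. -/
noncomputable def perim (C : Finset Cell) : ℕ := 2 * (bwidth C + bheight C)

/-- The cells of the bounding box of `C`. -/
def boundingBox (C : Finset Cell) : Set Cell :=
  {q | minX C ≤ q.1 ∧ q.1 ≤ maxX C ∧ minY C ≤ q.2 ∧ q.2 ≤ maxY C}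

/-- The leftmost square of the bottom row. -/
noncomputable def rootSquare (C : Finset Cell) : Cell :=
  (sInf {x : ℤ | ((x, minY C) : Cell) ∈ C}, minY C)

/-- The bottom-left cell of the bounding box. -/
noncomputable def originCell (C : Finset Cell) : Cell := (minX C, minY C)

def XYMonotone (C : Finset Cell) : Prop :=
  ∀ q ∈ C, (minX C ≤ q.1 - 1 → ((q.1 - 1, q.2) : Cell) ∈ C) ∧
    (minY C ≤ q.2 - 1 → ((q.1, q.2 - 1) : Cell) ∈ C)

def translateConf (C : Finset Cell) (v : Cell) : Finset Cell := C.image (· + v)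

/-- `s` has degree 1 in the edge-adjacency graph of `C`. -/
def DegreeOne (C : Finset Cell) (s : Cell) : Prop :=
  s ∈ C ∧ ∃! t, t ∈ C ∧ EdgeAdj s t

/-- A simple cycle of length at least 4 in the edge-adjacency graph of `C`. -/
def IsCycleIn (C : Finset Cell) (σ : List Cell) : Prop :=
  4 ≤ σ.length ∧ σ.Nodup ∧ (∀ s ∈ σ, s ∈ C) ∧ List.Chain' EdgeAdj σ ∧
  ∀ a b, σ.head? = some a → σ.getLast? = some b → EdgeAdj b a

/-- Vertex-adjacency avoiding a set `S`. -/
def OffAdj (S : Set Cell) (a b : Cell) : Prop := VertexAdj a b ∧ a ∉ S ∧ b ∉ S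

/-- The vertex-connected component of `q` in the complement of `S`. -/
def emptyComp (S : Set Cell) (q : Cell) : Set Cell :=
  {p | Relation.ReflTransGen (OffAdj S) q p}

/-- `q` lies in the closed region bounded by the cycle `σ`. -/
def EnclosedBy (σ : List Cell) (q : Cell) : Prop :=
  q ∈ σ ∨ (emptyComp {s | s ∈ σ} q).Finite

/-- The set of cells bounded by (and including) the cycle `σ`. -/
def regionOf (σ : List Cell) : Set Cell := {q | EnclosedBy σ q}

/-- The squares of `C` enclosed by cycle `σ`, together with loose squares. -/
def chunkWithCycle (C : Finset Cell) (σ : List Cell) : Set Cell :=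
  {s | s ∈ C ∧ EnclosedBy σ s} ∪
  {s | DegreeOne C s ∧ ∃ t, t ∈ C ∧ EnclosedBy σ t ∧ EdgeAdj s t}

/-- A chunk: an inclusion-maximal set of squares bounded by a simple cycle of
length at least `4`, together with its loose squares. -/
def IsChunk (C : Finset Cell) (K : Set Cell) : Prop :=
  (∃ σ, IsCycleIn C σ ∧ K = chunkWithCycle C σ) ∧
  ∀ K', (∃ σ, IsCycleIn C σ ∧ K' = chunkWithCycle C σ) → K ⊆ K' → K' = K

/-- `σ` is a boundary cycle of the chunk `K`. -/
def BoundaryCycle (C : Finset Cell) (K : Set Cell) (σ : List Cell) : Prop :=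
  IsChunk C K ∧ IsCycleIn C σ ∧ K = chunkWithCycle C σ

def InSomeChunk (C : Finset Cell) (s : Cell) : Prop := ∃ K, IsChunk C K ∧ s ∈ K

def LinkCells (C : Finset Cell) : Set Cell := {s | s ∈ C ∧ ¬ InSomeChunk C s}

/-- A link: a connected component of the squares not contained in any chunk. -/
def IsLink (C : Finset Cell) (L : Set Cell) : Prop :=
  ∃ s ∈ LinkCells C, L = {t | t ∈ LinkCells C ∧
    Relation.ReflTransGen (fun u v => u ∈ LinkCells C ∧ v ∈ LinkCells C ∧ EdgeAdj u v) s t}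

/-- A vertex of the component tree: a chunk or a link. -/
def IsComponent (C : Finset Cell) (K : Set Cell) : Prop := IsChunk C K ∨ IsLink C K

/-- Adjacency of components in the component tree. -/
def CompAdj (K K' : Set Cell) : Prop :=
  K ≠ K' ∧ ((K ∩ K').Nonempty ∨ ∃ s ∈ K, ∃ t ∈ K', EdgeAdj s t)

/-- A leaf of the component tree rooted at the component of the root square. -/
def IsLeafComponent (C : Finset Cell) (K : Set Cell) : Prop :=
  IsComponent C K ∧ {K' | IsComponent C K' ∧ CompAdj K K'}.Subsingleton ∧
  (rootSquare C ∉ K ∨ ∀ K', IsComponent C K' → K' = K)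

def IsLeafChunk (C : Finset Cell) (K : Set Cell) : Prop :=
  IsChunk C K ∧ IsLeafComponent C K

/-- A hole: a finite maximal vertex-connected set of empty cells. -/
def IsHole (C : Finset Cell) (H : Set Cell) : Prop :=
  ∃ q, q ∉ C ∧ H = emptyComp (C : Set Cell) q ∧ H.Finite

/-- A cell of the outside: the infinite vertex-connected set of empty cells. -/
def OutsideCell (C : Finset Cell) (q : Cell) : Prop :=
  q ∉ C ∧ (emptyComp (C : Set Cell) q).Infinite

/-- A chunk is solid if it encloses no hole. -/
def IsSolidChunk (C : Finset Cell) (K : Set Cell) : Prop :=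
  ∀ σ, BoundaryCycle C K σ → ∀ q, EnclosedBy σ q → q ∈ C

/-- An LM-move: an S- or W-slide, or an SW-, WS-, NW- or WN-convex transition. -/
def IsLMMove (C : Finset Cell) (c c' : Cell) : Prop :=
  (SlideMove C c c' ∧ (c' - c = ((0, -1) : Cell) ∨ c' - c = ((-1, 0) : Cell))) ∨
  (ConvexMove C c c' ∧ (c' - c = ((-1, -1) : Cell) ∨ c' - c = ((-1, 1) : Cell)))

/-- After the move of `c` to `c'`, all squares of `K` lie in a single chunk. -/
def SingleChunkAfter (C : Finset Cell) (K : Set Cell) (c c' : Cell) : Prop :=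
  ∃ K', IsChunk (ApplyMove C c c') K' ∧ insert c' (K \ {c}) ⊆ K'

/-- A valid LM-move of a square of the chunk `K`. -/
def ValidLMMove (C : Finset Cell) (K : Set Cell) (c c' : Cell) : Prop :=
  c ∈ K ∧ IsLMMove C c c' ∧ c' ∈ boundingBox C ∧ SingleChunkAfter C K c c'

def IsTopCorner (C : Finset Cell) (σ : List Cell) (q : Cell) : Prop :=
  q ∉ C ∧ q + (0, 1) ∈ σ ∧ q + (1, 1) ∈ σ ∧ q + (1, 0) ∈ σ

def IsBottomCorner (C : Finset Cell) (σ : List Cell) (q : Cell) : Prop :=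
  q ∉ C ∧ q + (0, -1) ∈ σ ∧ q + (1, -1) ∈ σ ∧ q + (1, 0) ∈ σ

/-- `b₁ b₂ b₃` occur consecutively (in some direction) on the cycle `σ`. -/
def CyclicConsecutive (σ : List Cell) (b₁ b₂ b₃ : Cell) : Prop :=
  ∃ n, (σ.rotate n).take 3 = [b₁, b₂, b₃] ∨ (σ.rotate n).take 3 = [b₃, b₂, b₁]

/-- The two slide moves of a corner move filling the corner `q`. -/
def CornerMoveSeq (C : Finset Cell) (q b₁ b₂ b₃ : Cell) (C' : Finset Cell) : Prop :=
  ∃ f, (f = b₁ ∨ f = b₃) ∧ SlideMove C f q ∧ SlideMove (ApplyMove C f q) b₂ f ∧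
    C' = ApplyMove (ApplyMove C f q) b₂ f

/-- A valid corner move at corner `q` with neighbors `b₁ b₂ b₃` on the boundary
cycle `σ` of chunk `K`, resulting in `C'`. -/
def ValidCornerMoveAt (C : Finset Cell) (K : Set Cell) (σ : List Cell)
    (q b₁ b₂ b₃ : Cell) (C' : Finset Cell) : Prop :=
  BoundaryCycle C K σ ∧ CyclicConsecutive σ b₁ b₂ b₃ ∧ CornerMoveSeq C q b₁ b₂ b₃ C' ∧
  ∃ K', IsChunk C' K' ∧ insert q (K \ {b₂}) ⊆ K'

def AdmitsValidCornerMove (C : Finset Cell) (K : Set Cell) : Prop :=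
  ∃ σ q C',
    (IsTopCorner C σ q ∧
      ValidCornerMoveAt C K σ q (q + (0, 1)) (q + (1, 1)) (q + (1, 0)) C') ∨
    (IsBottomCorner C σ q ∧
      ValidCornerMoveAt C K σ q (q + (0, -1)) (q + (1, -1)) (q + (1, 0)) C')

/-- A loose square of some chunk. -/
def LooseSquare (C : Finset Cell) (s : Cell) : Prop :=
  DegreeOne C s ∧ ∃ K, IsChunk C K ∧ s ∈ K

/-- Net effect of a chain move of a bottom-row square `s` of the chunk `K`,
where `(x, minY C)` is the first empty bottom-row cell closer to the origin. -/
def ChainMoveBottom (C : Finset Cell) (K : Set Cell) (s : Cell) (x : ℤ)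
    (C' : Finset Cell) : Prop :=
  s ∈ K ∧ s ∈ C ∧ s.2 = minY C ∧
  ConvexMove C s (s.1 - 1, s.2 - 1) ∧ SingleChunkAfter C K s (s.1 - 1, s.2 - 1) ∧
  minX C ≤ x ∧ x < s.1 ∧ ((x, minY C) : Cell) ∉ C ∧
  (∀ x', x < x' → x' < s.1 → ((x', minY C) : Cell) ∈ C) ∧
  ((¬ LooseSquare C (x + 1, minY C) ∧ C' = ApplyMove C s (x, minY C)) ∨
   (LooseSquare C (x + 1, minY C) ∧ C' = insert ((x + 1, minY C + 1) : Cell) (C.erase s)))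

/-- Net effect of a chain move of a leftmost-column square `s` (mirrored case). -/
def ChainMoveLeft (C : Finset Cell) (K : Set Cell) (s : Cell) (y : ℤ)
    (C' : Finset Cell) : Prop :=
  s ∈ K ∧ s ∈ C ∧ s.1 = minX C ∧
  ConvexMove C s (s.1 - 1, s.2 - 1) ∧ SingleChunkAfter C K s (s.1 - 1, s.2 - 1) ∧
  minY C ≤ y ∧ y < s.2 ∧ ((minX C, y) : Cell) ∉ C ∧
  (∀ y', y < y' → y' < s.2 → ((minX C, y') : Cell) ∈ C) ∧
  ((¬ LooseSquare C (minX C, y + 1) ∧ C' = ApplyMove C s (minX C, y)) ∨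
   (LooseSquare C (minX C, y + 1) ∧ C' = insert ((minX C + 1, y + 1) : Cell) (C.erase s)))

def AdmitsChainMove (C : Finset Cell) (K : Set Cell) : Prop :=
  ∃ C', (∃ s x, ChainMoveBottom C K s x C') ∨ (∃ s y, ChainMoveLeft C K s y C')

def ValidLMStep (C C' : Finset Cell) : Prop :=
  ∃ K c c', IsLeafChunk C K ∧ ValidLMMove C K c c' ∧ C' = ApplyMove C c c'

def ValidCornerStep (C C' : Finset Cell) : Prop :=
  ∃ K, IsLeafChunk C K ∧
    (∃ σ q,
      (IsTopCorner C σ q ∧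
        ValidCornerMoveAt C K σ q (q + (0, 1)) (q + (1, 1)) (q + (1, 0)) C') ∨
      (IsBottomCorner C σ q ∧
        ValidCornerMoveAt C K σ q (q + (0, -1)) (q + (1, -1)) (q + (1, 0)) C'))

def ChainStep (C C' : Finset Cell) : Prop :=
  ∃ K, IsLeafChunk C K ∧
    ((∃ s x, ChainMoveBottom C K s x C') ∨ (∃ s y, ChainMoveLeft C K s y C'))

/-- One step of the compaction procedure. -/
def CompactionStep (C C' : Finset Cell) : Prop :=
  ValidLMStep C C' ∨ ValidCornerStep C C' ∨ ChainStep C C'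

/-- Every nonempty row is a contiguous interval starting at the minimum column. -/
def IsLeftAlignedHistogram (S : Set Cell) : Prop :=
  ∃ x₀ : ℤ, (∀ c ∈ S, x₀ ≤ c.1) ∧
    ∀ c ∈ S, ∀ x : ℤ, x₀ ≤ x → x ≤ c.1 → ((x, c.2) : Cell) ∈ S

/-- A connector: a chunk square edge-adjacent to a square in a link or another chunk. -/
def IsConnector (C : Finset Cell) (s : Cell) : Prop :=
  (∃ K, IsChunk C K ∧ s ∈ K) ∧
  ∃ t, t ∈ C ∧ EdgeAdj s t ∧
    ((∃ L, IsLink C L ∧ t ∈ L) ∨ (∃ K', IsChunk C K' ∧ t ∈ K' ∧ s ∉ K'))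

/-- The squares of the descendant components of the cut square `s`. -/
def Descendants (C : Finset Cell) (s : Cell) : Set Cell :=
  {t | t ∈ C.erase s ∧ ¬ Reach (C.erase s) t (rootSquare C)}

def score (C : Finset Cell) : ℤ := ∑ c ∈ C, (2 * c.1 + c.2)

noncomputable def regionTop (R : Set Cell) : ℤ := sSup (Prod.snd '' R)
noncomputable def regionLeft (R : Set Cell) : ℤ := sInf (Prod.fst '' R)
def rowOf (R : Set Cell) (y : ℤ) : Set ℤ := {x | ((x, y) : Cell) ∈ R}
/-! Auxiliary development -/

namespace XYT

lemma edgeAdj_symm {u v : Cell} (h : EdgeAdj u v) : EdgeAdj v u := by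
  unfold EdgeAdj at *; rw [abs_sub_comm v.1, abs_sub_comm v.2]; exact h

lemma reach_symm {C : Finset Cell} {a b : Cell} (h : Reach C a b) : Reach C b a := by
  have : Std.Symm (fun u v : Cell => u ∈ C ∧ v ∈ C ∧ EdgeAdj u v) :=
    ⟨fun u v ⟨h1, h2, h3⟩ => ⟨h2, h1, edgeAdj_symm h3⟩⟩
  exact Relation.ReflTransGen.stdSymm.symm _ _ h

lemma reach_mono {C C' : Finset Cell} (hsub : C ⊆ C') {a b : Cell} (h : Reach C a b) :
    Reach C' a b := by
  refine Relation.ReflTransGen.mono ?_ _ _ h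
  intro u v ⟨h1, h2, h3⟩; exact ⟨hsub h1, hsub h2, h3⟩

lemma edgeAdj_of_coords {u v : Cell}
    (h : (v.1 = u.1 + 1 ∧ v.2 = u.2) ∨ (v.1 = u.1 - 1 ∧ v.2 = u.2) ∨
         (v.1 = u.1 ∧ v.2 = u.2 + 1) ∨ (v.1 = u.1 ∧ v.2 = u.2 - 1)) : EdgeAdj u v := by
  unfold EdgeAdj
  rcases h with ⟨h1, h2⟩ | ⟨h1, h2⟩ | ⟨h1, h2⟩ | ⟨h1, h2⟩ <;> rw [h1, h2] <;> simp

/-- Young diagram anchored at `(a, b)`. -/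
def Young (a b : ℤ) (S : Finset Cell) : Prop :=
  (∀ q ∈ S, a ≤ q.1 ∧ b ≤ q.2) ∧
  ∀ q ∈ S, (a < q.1 → ((q.1 - 1, q.2) : Cell) ∈ S) ∧ (b < q.2 → ((q.1, q.2 - 1) : Cell) ∈ S)

lemma young_reach_origin {a b : ℤ} {S : Finset Cell} (hY : Young a b S) :
    ∀ n : ℕ, ∀ q ∈ S, ((q.1 - a) + (q.2 - b)).toNat ≤ n → Reach S q (a, b) := by
  intro n
  induction n with
  | zero =>
    intro q hq hm
    have hb := hY.1 q hq
    have : q.1 = a ∧ q.2 = b := by omega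
    have : q = ((a, b) : Cell) := by
      rcases q with ⟨x, y⟩; simp_all
    rw [this]
    exact Relation.ReflTransGen.refl
  | succ n ih =>
    intro q hq hm
    have hb := hY.1 q hq
    by_cases hx : a < q.1
    · have h1 : ((q.1 - 1, q.2) : Cell) ∈ S := (hY.2 q hq).1 hx
      have hr := ih _ h1 (by show ((q.1 - 1) - a + (q.2 - b)).toNat ≤ n; omega)
      exact Relation.ReflTransGen.head ⟨hq, h1, edgeAdj_of_coords (by simp)⟩ hr
    · by_cases hy : b < q.2
      · have h1 : ((q.1, q.2 - 1) : Cell) ∈ S := (hY.2 q hq).2 hy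
        have hr := ih _ h1 (by show (q.1 - a + ((q.2 - 1) - b)).toNat ≤ n; omega)
        exact Relation.ReflTransGen.head ⟨hq, h1, edgeAdj_of_coords (by simp)⟩ hr
      · have : q = ((a, b) : Cell) := by
          rcases q with ⟨x, y⟩; simp_all; omega
        rw [this]
        exact Relation.ReflTransGen.refl

lemma young_origin_mem {a b : ℤ} {S : Finset Cell} (hY : Young a b S) (hne : S.Nonempty) :
    ((a, b) : Cell) ∈ S := by
  obtain ⟨q, hq⟩ := hne
  have hr := young_reach_origin hY ((q.1 - a) + (q.2 - b)).toNat q hq le_rfl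
  rcases (Relation.ReflTransGen.cases_tail hr) with h | ⟨c, _, hc⟩
  · exact h ▸ hq
  · exact hc.2.1

lemma young_edgeConnected {a b : ℤ} {S : Finset Cell} (hY : Young a b S) (hne : S.Nonempty) :
    EdgeConnected S := by
  refine ⟨hne, fun u hu v hv => ?_⟩
  have h1 := young_reach_origin hY _ u hu le_rfl
  have h2 := young_reach_origin hY _ v hv le_rfl
  exact h1.trans (reach_symm h2)

lemma edgeConnected_insert {S : Finset Cell} {s t : Cell} (h : EdgeConnected S)
    (ht : t ∈ S) (hadj : EdgeAdj s t) : EdgeConnected (insert s S) := by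
  obtain ⟨hne, hconn⟩ := h
  refine ⟨⟨s, Finset.mem_insert_self s S⟩, ?_⟩
  have hst : Reach (insert s S) s t :=
    Relation.ReflTransGen.single ⟨Finset.mem_insert_self s S, Finset.mem_insert_of_mem ht, hadj⟩
  intro u hu v hv
  rcases Finset.mem_insert.1 hu with rfl | hu' <;> rcases Finset.mem_insert.1 hv with rfl | hv'
  · exact Relation.ReflTransGen.refl
  · exact hst.trans (reach_mono (Finset.subset_insert _ _) (hconn t ht v hv'))
  · exact (reach_mono (Finset.subset_insert _ _) (hconn u hu' t ht)).trans (reach_symm hst)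
  · exact reach_mono (Finset.subset_insert _ _) (hconn u hu' v hv')

end XYT
namespace XYT

lemma reconfig_zero {C : Finset Cell} (h : EdgeConnected C) :
    ReconfigSeq 0 (fun _ => C) := by
  constructor
  · intro i hi; omega
  · intro i _; exact h

lemma reconfig_trans {k l : ℕ} {f g : ℕ → Finset Cell} (hf : ReconfigSeq k f)
    (hg : ReconfigSeq l g) (hfg : f k = g 0) :
    ∃ h : ℕ → Finset Cell, ReconfigSeq (k + l) h ∧ h 0 = f 0 ∧ h (k + l) = g l := by
  refine ⟨fun i => if i < k then f i else g (i - k), ⟨?_, ?_⟩, ?_, ?_⟩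
  · intro i hi
    by_cases h1 : i + 1 < k
    · simp only [if_pos (by omega : i < k), if_pos h1]
      exact hf.1 i (by omega)
    · by_cases h2 : i < k
      · have hik : i + 1 = k := by omega
        simp only [if_pos h2, if_neg h1]
        have : g (i + 1 - k) = f k := by rw [hik]; simp [hfg]
        rw [this, ← hik]
        exact hf.1 i (by omega)
      · simp only [if_neg h2, if_neg h1]
        have : i + 1 - k = (i - k) + 1 := by omega
        rw [this]
        exact hg.1 (i - k) (by omega)
  · intro i hi
    by_cases h2 : i < k
    · simp only [if_pos h2]; exact hf.2 i (by omega)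
    · simp only [if_neg h2]; exact hg.2 (i - k) (by omega)
  · by_cases h0 : 0 < k
    · simp [h0]
    · have hk : k = 0 := by omega
      subst hk
      simpa using hfg.symm
  · simp only [if_neg (by omega : ¬ (k + l < k))]
    congr 1; omega

lemma reconfig_single {C C' : Finset Cell} (h : MoveStep C C')
    (h1 : EdgeConnected C) (h2 : EdgeConnected C') :
    ReconfigSeq 1 (fun i => if i = 0 then C else C') := by
  constructor
  · intro i hi
    have : i = 0 := by omega
    subst this; simpa using h
  · intro i hi
    rcases Nat.le_one_iff_eq_zero_or_eq_one.1 hi with rfl | rfl <;> simp [h1, h2]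

lemma unitvec_ne_zero {d : Cell} (h : IsUnitVec d) : d ≠ 0 := by
  rcases h with rfl | rfl | rfl | rfl <;> simp [Prod.ext_iff]

lemma unitvec_neg {d : Cell} (h : IsUnitVec d) : IsUnitVec (-d) := by
  rcases h with rfl | rfl | rfl | rfl <;> simp [IsUnitVec, Prod.ext_iff] <;> norm_num

lemma orth_sum_ne_zero {d e : Cell} (hd : IsUnitVec d) (he : IsUnitVec e) (ho : Orth d e) :
    d + e ≠ 0 := by
  rcases hd with rfl | rfl | rfl | rfl <;> rcases he with rfl | rfl | rfl | rfl <;>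
    simp_all [Orth, Prod.ext_iff] <;> omega

lemma applyMove_inv {C : Finset Cell} {c c' : Cell} (hc : c ∈ C) (hc' : c' ∉ C) :
    ApplyMove (ApplyMove C c c') c' c = C := by
  unfold ApplyMove
  ext q
  simp only [Finset.mem_insert, Finset.mem_erase]
  constructor
  · rintro (rfl | ⟨hq1, rfl | ⟨hq2, hq3⟩⟩)
    · exact hc
    · exact absurd rfl hq1
    · exact hq3
  · intro hq
    by_cases h1 : q = c
    · exact Or.inl h1
    · exact Or.inr ⟨fun h => hc' (h ▸ hq), Or.inr ⟨h1, hq⟩⟩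

lemma mem_applyMove_of_ne {C : Finset Cell} {c c' q : Cell} (hq : q ∈ C) (h1 : q ≠ c) :
    q ∈ ApplyMove C c c' := by
  exact Finset.mem_insert_of_mem (Finset.mem_erase.2 ⟨h1, hq⟩)

lemma not_mem_applyMove {C : Finset Cell} {c c' q : Cell} (hq : q ∉ C) (h1 : q ≠ c') :
    q ∉ ApplyMove C c c' := by
  simp only [ApplyMove, Finset.mem_insert, Finset.mem_erase]
  rintro (rfl | ⟨_, h⟩)
  · exact h1 rfl
  · exact hq h

lemma mem_applyMove_iff {C : Finset Cell} {c c' q : Cell} (hq1 : q ≠ c) (hq2 : q ≠ c') :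
    (q ∈ ApplyMove C c c' ↔ q ∈ C) := by
  simp [ApplyMove, Finset.mem_insert, Finset.mem_erase, hq1, hq2]

lemma self_not_mem_applyMove {C : Finset Cell} {c c' : Cell} (h1 : c ≠ c') :
    c ∉ ApplyMove C c c' := by
  simp only [ApplyMove, Finset.mem_insert, Finset.mem_erase]
  rintro (h | ⟨h, _⟩)
  · exact h1 h
  · exact h rfl

lemma orth_neg {d e : Cell} (h : Orth d e) : Orth (-d) (-e) := by
  simp only [Orth] at *
  simp only [Prod.fst_neg, Prod.snd_neg, neg_mul_neg]
  exact h

lemma xor_symm' {p q : Prop} (h : Xor' p q) : Xor' q p := h.symm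

lemma moveStep_symm {C C' : Finset Cell} (h : MoveStep C C') : MoveStep C' C := by
  obtain ⟨c, c', hmv, hC'⟩ := h
  rcases hmv with ⟨hc, hc', d, hd, hcd, e, he, ho, h1, h2⟩ | ⟨hc, hc', d, e, hd, he, ho, hcd, hx⟩
  · -- slide reverse
    have hd0 : d ≠ 0 := unitvec_ne_zero hd
    have he0 : e ≠ 0 := unitvec_ne_zero he
    have hde0 : d + e ≠ 0 := orth_sum_ne_zero hd he ho
    have hcc' : c' ≠ c := by
      rw [hcd]; intro hh; exact hd0 (add_eq_left.mp hh)
    refine ⟨c', c, Or.inl ⟨?_, ?_, -d, unitvec_neg hd, ?_, e, he, ?_, ?_, ?_⟩, ?_⟩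
    · rw [hC']; exact Finset.mem_insert_self _ _
    · rw [hC']; exact self_not_mem_applyMove (Ne.symm hcc')
    · rw [hcd]; abel
    · rcases hd with rfl | rfl | rfl | rfl <;> rcases he with rfl | rfl | rfl | rfl <;>
        simp_all [Orth] <;> omega
    · -- c' + e = c + d + e ∈ C'
      have hne1 : c + d + e ≠ c := by
        rw [add_assoc]; intro hh; exact hde0 (add_eq_left.mp hh)
      have hne2 : c + d + e ≠ c' := by
        rw [hcd]; intro hh
        exact he0 (add_eq_left.mp hh)
      have hgoal : c' + e = c + d + e := by rw [hcd]
      rw [hC', hgoal]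
      exact (mem_applyMove_iff hne1 hne2).mpr h2
    · -- c' + -d + e = c + e ∈ C'
      have hcol : c' + -d + e = c + e := by rw [hcd]; abel
      have hne1 : c + e ≠ c := fun hh => he0 (add_eq_left.mp hh)
      have hdne : e ≠ d := by
        rcases hd with rfl | rfl | rfl | rfl <;> rcases he with rfl | rfl | rfl | rfl <;>
          simp_all [Orth, Prod.ext_iff] <;> omega
      have hne2 : c + e ≠ c' := by
        rw [hcd]; intro hh
        exact hdne (add_left_cancel hh)
      rw [hC', hcol]
      exact (mem_applyMove_iff hne1 hne2).mpr h1
    · rw [hC']; exact (applyMove_inv hc hc').symm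
  · -- convex reverse
    have hd0 : d ≠ 0 := unitvec_ne_zero hd
    have he0 : e ≠ 0 := unitvec_ne_zero he
    have hde0 : d + e ≠ 0 := orth_sum_ne_zero hd he ho
    have hcc' : c' ≠ c := by
      rw [hcd, add_assoc]; intro hh; exact hde0 (add_eq_left.mp hh)
    have hed : c' + -d = c + e := by rw [hcd]; abel
    have hee : c' + -e = c + d := by rw [hcd]; abel
    have hne_ec : c + e ≠ c := fun hh => he0 (add_eq_left.mp hh)
    have hne_dc : c + d ≠ c := fun hh => hd0 (add_eq_left.mp hh)
    have hne_ec' : c + e ≠ c' := by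
      rw [hcd, add_assoc]; intro hh
      have h3 := add_left_cancel hh
      exact hd0 (add_eq_right.mp h3.symm)
    have hne_dc' : c + d ≠ c' := by
      rw [hcd]; intro hh
      exact he0 (add_eq_left.mp hh.symm)
    refine ⟨c', c, Or.inr ⟨?_, ?_, -d, -e, unitvec_neg hd, unitvec_neg he, orth_neg ho,
      ?_, ?_⟩, ?_⟩
    · rw [hC']; exact Finset.mem_insert_self _ _
    · rw [hC']; exact self_not_mem_applyMove (Ne.symm hcc')
    · rw [hcd]; abel
    · rw [hC', hed, hee, mem_applyMove_iff hne_ec hne_ec', mem_applyMove_iff hne_dc hne_dc']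
      exact hx.symm
    · rw [hC']; exact (applyMove_inv hc hc').symm

lemma reconfig_reverse {k : ℕ} {f : ℕ → Finset Cell} (hf : ReconfigSeq k f) :
    ReconfigSeq k (fun i => f (k - i)) := by
  constructor
  · intro i hi
    have h1 : k - i = (k - (i + 1)) + 1 := by omega
    have := hf.1 (k - (i + 1)) (by omega)
    simp only []
    rw [h1]
    exact moveStep_symm this
  · intro i _
    exact hf.2 (k - i) (by omega)

end XYT
namespace XYT

lemma young_row_mem {a b : ℤ} {E : Finset Cell} (hY : Young a b E) :
    ∀ n : ℕ, ∀ x' x : ℤ, ((x', b) : Cell) ∈ E → a ≤ x → x ≤ x' → (x' - x).toNat ≤ n →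
      ((x, b) : Cell) ∈ E := by
  intro n
  induction n with
  | zero =>
    intro x' x hm _ h1 h2
    have : x = x' := by omega
    rw [this]; exact hm
  | succ n ih =>
    intro x' x hm ha h1 h2
    by_cases hx : x = x'
    · rw [hx]; exact hm
    · have h3 : ((x' - 1, b) : Cell) ∈ E := (hY.2 _ hm).1 (by show a < x'; omega)
      exact ih (x' - 1) x h3 ha (by omega) (by omega)

lemma terminal_is_target {a b X : ℤ} {E : Finset Cell} (hY : Young a b E)
    (hbX : ∀ q ∈ E, q.1 ≤ X) {x : ℤ} (hnot : ((x, b) : Cell) ∉ E)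
    (hmem : ((x - 1, b) : Cell) ∈ E) :
    x = sSup {x : ℤ | ((x, b) : Cell) ∈ E} + 1 := by
  set S0 : Set ℤ := {x : ℤ | ((x, b) : Cell) ∈ E} with hS0
  have hfin : S0.Finite := by
    apply Set.Finite.subset (Set.Finite.image Prod.fst E.finite_toSet)
    intro z hz
    exact ⟨(z, b), hz, rfl⟩
  have hne0 : S0.Nonempty := ⟨x - 1, hmem⟩
  have hbdd : BddAbove S0 := hfin.bddAbove
  have hsup_mem : sSup S0 ∈ S0 := hne0.csSup_mem hfin
  have h1 : x - 1 ≤ sSup S0 := le_csSup hbdd hmem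
  have ha : a ≤ x - 1 := (hY.1 _ hmem).1
  by_cases h2 : x ≤ sSup S0
  · exfalso
    exact hnot (young_row_mem hY (sSup S0 - x).toNat (sSup S0) x hsup_mem (by omega) h2 le_rfl)
  · omega

lemma moveStep_slide_right {E : Finset Cell} {c : Cell} (hc : c ∉ E)
    (hc' : ((c.1 + 1, c.2) : Cell) ∉ E)
    (h1 : ((c.1, c.2 - 1) : Cell) ∈ E) (h2 : ((c.1 + 1, c.2 - 1) : Cell) ∈ E) :
    MoveStep (insert c E) (insert ((c.1 + 1, c.2) : Cell) E) := by
  have he1 : c + ((0, -1) : Cell) = ((c.1, c.2 - 1) : Cell) := by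
    simp [Prod.ext_iff]; ring
  have he2 : c + ((1, 0) : Cell) + ((0, -1) : Cell) = ((c.1 + 1, c.2 - 1) : Cell) := by
    simp [Prod.ext_iff]; ring
  refine ⟨c, (c.1 + 1, c.2), Or.inl ⟨Finset.mem_insert_self _ _, ?_,
    (1, 0), by simp [IsUnitVec], by simp [Prod.ext_iff],
    (0, -1), by simp [IsUnitVec], by norm_num [Orth], ?_, ?_⟩, ?_⟩
  · intro h
    rcases Finset.mem_insert.1 h with h | h
    · have : c.1 + 1 = c.1 := congrArg Prod.fst h
      omega
    · exact hc' h
  · rw [he1]; exact Finset.mem_insert_of_mem h1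
  · rw [he2]; exact Finset.mem_insert_of_mem h2
  · unfold ApplyMove; rw [Finset.erase_insert hc]

lemma moveStep_convex_dr {E : Finset Cell} {c : Cell} (hc : c ∉ E)
    (hd : ((c.1 + 1, c.2) : Cell) ∉ E)
    (hc' : ((c.1 + 1, c.2 - 1) : Cell) ∉ E)
    (h1 : ((c.1, c.2 - 1) : Cell) ∈ E) :
    MoveStep (insert c E) (insert ((c.1 + 1, c.2 - 1) : Cell) E) := by
  have he1 : c + ((0, -1) : Cell) = ((c.1, c.2 - 1) : Cell) := by
    simp [Prod.ext_iff]; ring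
  have he2 : c + ((1, 0) : Cell) = ((c.1 + 1, c.2) : Cell) := by
    simp [Prod.ext_iff]
  refine ⟨c, (c.1 + 1, c.2 - 1), Or.inr ⟨Finset.mem_insert_self _ _, ?_,
    (1, 0), (0, -1), by simp [IsUnitVec], by simp [IsUnitVec], by norm_num [Orth],
    by simp [Prod.ext_iff]; ring, ?_⟩, ?_⟩
  · intro h
    rcases Finset.mem_insert.1 h with h | h
    · have : c.2 - 1 = c.2 := congrArg Prod.snd h
      omega
    · exact hc' h
  · rw [he1, he2]
    refine Or.inr ⟨Finset.mem_insert_of_mem h1, ?_⟩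
    intro h
    rcases Finset.mem_insert.1 h with h | h
    · have : c.1 + 1 = c.1 := congrArg Prod.fst h
      omega
    · exact hd h
  · unfold ApplyMove; rw [Finset.erase_insert hc]

lemma moveStep_slide_down {E : Finset Cell} {c : Cell} (hc : c ∉ E)
    (hc' : ((c.1, c.2 - 1) : Cell) ∉ E)
    (h1 : ((c.1 - 1, c.2) : Cell) ∈ E) (h2 : ((c.1 - 1, c.2 - 1) : Cell) ∈ E) :
    MoveStep (insert c E) (insert ((c.1, c.2 - 1) : Cell) E) := by
  have he1 : c + ((-1, 0) : Cell) = ((c.1 - 1, c.2) : Cell) := by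
    simp [Prod.ext_iff]; ring
  have he2 : c + ((0, -1) : Cell) + ((-1, 0) : Cell) = ((c.1 - 1, c.2 - 1) : Cell) := by
    simp [Prod.ext_iff]; constructor <;> ring
  refine ⟨c, (c.1, c.2 - 1), Or.inl ⟨Finset.mem_insert_self _ _, ?_,
    (0, -1), by simp [IsUnitVec], by simp [Prod.ext_iff]; ring,
    (-1, 0), by simp [IsUnitVec], by norm_num [Orth], ?_, ?_⟩, ?_⟩
  · intro h
    rcases Finset.mem_insert.1 h with h | h
    · have : c.2 - 1 = c.2 := congrArg Prod.snd h
      omega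
    · exact hc' h
  · rw [he1]; exact Finset.mem_insert_of_mem h1
  · rw [he2]; exact Finset.mem_insert_of_mem h2
  · unfold ApplyMove; rw [Finset.erase_insert hc]

end XYT
namespace XYT

/-- Rolling a free cell along the staircase boundary of a Young diagram down to
the right end of the bottom row. -/
lemma walk_to_target {a b X : ℤ} {E : Finset Cell} (hY : Young a b E) (hne : E.Nonempty)
    (hbX : ∀ q ∈ E, q.1 ≤ X) :
    ∀ n : ℕ, ∀ c : Cell, c ∉ E →
      ((b < c.2 ∧ ((c.1, c.2 - 1) : Cell) ∈ E) ∨ ((c.1 - 1, c.2) : Cell) ∈ E) →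
      ((X + 1 - c.1) + (c.2 - b)).toNat ≤ n →
      ∃ (k : ℕ) (f : ℕ → Finset Cell), k ≤ n ∧ f 0 = insert c E ∧
        f k = insert ((sSup {x : ℤ | ((x, b) : Cell) ∈ E} + 1, b) : Cell) E ∧
        ReconfigSeq k f := by
  have hconnE : EdgeConnected E := young_edgeConnected hY hne
  intro n
  induction n with
  | zero =>
    intro c hcE hinv hm
    rcases hinv with ⟨hby, hbelow⟩ | hleft
    · exfalso
      have hx : c.1 ≤ X := hbX (c.1, c.2 - 1) hbelow
      omega
    · have hbc : b ≤ c.2 := (hY.1 (c.1 - 1, c.2) hleft).2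
      have hxc : c.1 - 1 ≤ X := hbX (c.1 - 1, c.2) hleft
      have hcb : c.2 = b := by omega
      have hceq : c = ((sSup {x : ℤ | ((x, b) : Cell) ∈ E} + 1, b) : Cell) := by
        have h1 : ((c.1, b) : Cell) ∉ E := by rw [← hcb]; simpa using hcE
        have h2 : ((c.1 - 1, b) : Cell) ∈ E := by rw [← hcb]; exact hleft
        have := terminal_is_target hY hbX h1 h2
        rcases c with ⟨cx, cy⟩
        simp_all
      refine ⟨0, fun _ => insert c E, le_rfl, rfl, by rw [hceq], ?_⟩
      exact reconfig_zero (edgeConnected_insert hconnE hleft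
        (edgeAdj_of_coords (by simp)))
  | succ n ih =>
    intro c hcE hinv hm
    by_cases hA : b < c.2 ∧ ((c.1, c.2 - 1) : Cell) ∈ E
    · obtain ⟨hby, hbelow⟩ := hA
      have hxc : c.1 ≤ X := hbX (c.1, c.2 - 1) hbelow
      have hac : a ≤ c.1 := (hY.1 (c.1, c.2 - 1) hbelow).1
      have hconnC : EdgeConnected (insert c E) :=
        edgeConnected_insert hconnE hbelow (edgeAdj_of_coords (by simp))
      -- the cell to the right is always empty
      have hright : ((c.1 + 1, c.2) : Cell) ∉ E := by
        intro h
        have := (hY.2 _ h).1 (by show a < c.1 + 1; omega)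
        have hcc : ((c.1 + 1 - 1, c.2) : Cell) = c := by
          rcases c with ⟨cx, cy⟩; simp
        rw [hcc] at this
        exact hcE this
      by_cases hR : ((c.1 + 1, c.2 - 1) : Cell) ∈ E
      · -- slide right
        set c' : Cell := (c.1 + 1, c.2) with hc'def
        have hc'E : c' ∉ E := hright
        have hstep := moveStep_slide_right hcE hright hbelow hR
        have hconnC' : EdgeConnected (insert c' E) :=
          edgeConnected_insert hconnE hR (edgeAdj_of_coords (by simp [hc'def]))
        obtain ⟨k, f, hk, hf0, hfk, hseq⟩ := ih c' hc'E
          (Or.inl ⟨by show b < c.2; omega, by show ((c.1 + 1, c.2 - 1) : Cell) ∈ E; exact hR⟩)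
          (by show ((X + 1 - (c.1 + 1)) + (c.2 - b)).toNat ≤ n; omega)
        have hsingle := reconfig_single hstep hconnC hconnC'
        obtain ⟨h, hseq', h0, hl⟩ := reconfig_trans hsingle hseq (by simpa using hf0.symm)
        exact ⟨1 + k, h, by omega, by simpa using h0, by rw [hl, hfk], hseq'⟩
      · -- convex transition down-right
        set c' : Cell := (c.1 + 1, c.2 - 1) with hc'def
        have hc'E : c' ∉ E := hR
        have hstep := moveStep_convex_dr hcE hright hR hbelow
        have hconnC' : EdgeConnected (insert c' E) :=
          edgeConnected_insert hconnE hbelow (edgeAdj_of_coords (by simp [hc'def]))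
        obtain ⟨k, f, hk, hf0, hfk, hseq⟩ := ih c' hc'E
          (Or.inr (by show ((c.1 + 1 - 1, c.2 - 1) : Cell) ∈ E; simpa using hbelow))
          (by show ((X + 1 - (c.1 + 1)) + (c.2 - 1 - b)).toNat ≤ n; omega)
        have hsingle := reconfig_single hstep hconnC hconnC'
        obtain ⟨h, hseq', h0, hl⟩ := reconfig_trans hsingle hseq (by simpa using hf0.symm)
        exact ⟨1 + k, h, by omega, by simpa using h0, by rw [hl, hfk], hseq'⟩
    · -- state B
      have hleft : ((c.1 - 1, c.2) : Cell) ∈ E := by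
        rcases hinv with h | h
        · exact absurd h hA
        · exact h
      have hbc : b ≤ c.2 := (hY.1 (c.1 - 1, c.2) hleft).2
      have hxc : c.1 - 1 ≤ X := hbX (c.1 - 1, c.2) hleft
      have hconnC : EdgeConnected (insert c E) :=
        edgeConnected_insert hconnE hleft (edgeAdj_of_coords (by simp))
      by_cases hby : b < c.2
      · -- slide down
        have hbelow_not : ((c.1, c.2 - 1) : Cell) ∉ E := fun h => hA ⟨hby, h⟩
        have hlb : ((c.1 - 1, c.2 - 1) : Cell) ∈ E := (hY.2 _ hleft).2 hby
        set c' : Cell := (c.1, c.2 - 1) with hc'def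
        have hstep := moveStep_slide_down hcE hbelow_not hleft hlb
        have hconnC' : EdgeConnected (insert c' E) :=
          edgeConnected_insert hconnE hlb (edgeAdj_of_coords (by simp [hc'def]))
        obtain ⟨k, f, hk, hf0, hfk, hseq⟩ := ih c' hbelow_not
          (Or.inr (by show ((c.1 - 1, c.2 - 1) : Cell) ∈ E; exact hlb))
          (by show ((X + 1 - c.1) + (c.2 - 1 - b)).toNat ≤ n; omega)
        have hsingle := reconfig_single hstep hconnC hconnC'
        obtain ⟨h, hseq', h0, hl⟩ := reconfig_trans hsingle hseq (by simpa using hf0.symm)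
        exact ⟨1 + k, h, by omega, by simpa using h0, by rw [hl, hfk], hseq'⟩
      · -- terminal
        have hcb : c.2 = b := by omega
        have hceq : c = ((sSup {x : ℤ | ((x, b) : Cell) ∈ E} + 1, b) : Cell) := by
          have h1 : ((c.1, b) : Cell) ∉ E := by rw [← hcb]; simpa using hcE
          have h2 : ((c.1 - 1, b) : Cell) ∈ E := by rw [← hcb]; exact hleft
          have := terminal_is_target hY hbX h1 h2
          rcases c with ⟨cx, cy⟩
          simp_all
        exact ⟨0, fun _ => insert c E, by omega, rfl, by rw [hceq],
          reconfig_zero hconnC⟩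

end XYT
namespace XYT

lemma prod_eq {q : Cell} {x y : ℤ} (h1 : q.1 = x) (h2 : q.2 = y) : q = ((x, y) : Cell) := by
  rcases q with ⟨u, v⟩; simp_all

lemma transform_aux {a b X Y : ℤ} {C₂ : Finset Cell} (hY₂ : Young a b C₂)
    (h₂ : EdgeConnected C₂) (hB₂ : ∀ q ∈ C₂, q.1 ≤ X ∧ q.2 ≤ Y) :
    ∀ r : ℕ, ∀ D : Finset Cell, Young a b D → D.card = C₂.card →
      (∀ q ∈ D, q.1 ≤ X ∧ q.2 ≤ Y) → (D \ C₂).card ≤ r →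
      ∃ (k : ℕ) (f : ℕ → Finset Cell),
        k ≤ 2 * ((X + 1 - a) + (Y - b)).toNat * r ∧ f 0 = D ∧ f k = C₂ ∧
        ReconfigSeq k f := by
  intro r
  induction r with
  | zero =>
    intro D hYD hcard _ hsd
    have hD : D = C₂ := by
      have h1 : D \ C₂ = ∅ := Finset.card_eq_zero.mp (by omega)
      have h2 : D ⊆ C₂ := Finset.sdiff_eq_empty_iff_subset.mp h1
      exact Finset.eq_of_subset_of_card_le h2 (by omega)
    exact ⟨0, fun _ => C₂, by omega, by rw [hD], rfl, reconfig_zero h₂⟩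
  | succ r ih =>
    intro D hYD hcard hBD hsd
    by_cases hne : (D \ C₂).Nonempty
    · obtain ⟨p, hpmem, hpmax⟩ := Finset.exists_max_image (D \ C₂) (fun q => q.1 + q.2) hne
      have hpD : p ∈ D := (Finset.mem_sdiff.1 hpmem).1
      have hpC₂ : p ∉ C₂ := (Finset.mem_sdiff.1 hpmem).2
      have hDne : D.Nonempty := ⟨p, hpD⟩
      have hoD : ((a, b) : Cell) ∈ D := young_origin_mem hYD hDne
      have hoC₂ : ((a, b) : Cell) ∈ C₂ := young_origin_mem hY₂ h₂.1
      have hpo : p ≠ ((a, b) : Cell) := fun h => hpC₂ (h ▸ hoC₂)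
      have hpa : a ≤ p.1 := (hYD.1 p hpD).1
      have hpb : b ≤ p.2 := (hYD.1 p hpD).2
      -- p is a corner of D
      have hp1 : ((p.1 + 1, p.2) : Cell) ∉ D := by
        intro h
        by_cases hc : ((p.1 + 1, p.2) : Cell) ∈ C₂
        · have h3 := (hY₂.2 _ hc).1 (by show a < p.1 + 1; omega)
          have hcc : ((p.1 + 1 - 1, p.2) : Cell) = p := prod_eq (by omega) rfl
          exact hpC₂ (hcc ▸ h3)
        · have h4 := hpmax _ (Finset.mem_sdiff.2 ⟨h, hc⟩)
          first
          | (simp at h4; omega)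
          | simp at h4
      have hp2 : ((p.1, p.2 + 1) : Cell) ∉ D := by
        intro h
        by_cases hc : ((p.1, p.2 + 1) : Cell) ∈ C₂
        · have h3 := (hY₂.2 _ hc).2 (by show b < p.2 + 1; omega)
          have hcc : ((p.1, p.2 + 1 - 1) : Cell) = p := prod_eq rfl (by omega)
          exact hpC₂ (hcc ▸ h3)
        · have h4 := hpmax _ (Finset.mem_sdiff.2 ⟨h, hc⟩)
          first
          | (simp at h4; omega)
          | simp at h4
      set E := D.erase p with hEdef
      have hpE : p ∉ E := Finset.notMem_erase p D
      have hDins : insert p E = D := Finset.insert_erase hpD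
      have hoE : ((a, b) : Cell) ∈ E := Finset.mem_erase.2 ⟨Ne.symm hpo, hoD⟩
      have hEne : E.Nonempty := ⟨_, hoE⟩
      have hYE : Young a b E := by
        constructor
        · intro q hq; exact hYD.1 q (Finset.mem_of_mem_erase hq)
        · intro q hq
          have hqD := Finset.mem_of_mem_erase hq
          constructor
          · intro hx
            refine Finset.mem_erase.2 ⟨?_, (hYD.2 q hqD).1 hx⟩
            intro heq
            apply hp1
            obtain ⟨h1, h2⟩ := Prod.ext_iff.mp heq
            simp at h1 h2
            have : ((p.1 + 1, p.2) : Cell) = q := prod_eq (by omega) (by omega)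
            exact this ▸ hqD
          · intro hy
            refine Finset.mem_erase.2 ⟨?_, (hYD.2 q hqD).2 hy⟩
            intro heq
            apply hp2
            obtain ⟨h1, h2⟩ := Prod.ext_iff.mp heq
            simp at h1 h2
            have : ((p.1, p.2 + 1) : Cell) = q := prod_eq (by omega) (by omega)
            exact this ▸ hqD
      have hbXE : ∀ q ∈ E, q.1 ≤ X := fun q hq => (hBD q (Finset.mem_of_mem_erase hq)).1
      -- invariant for p
      have hinv_p : (b < p.2 ∧ ((p.1, p.2 - 1) : Cell) ∈ E) ∨ ((p.1 - 1, p.2) : Cell) ∈ E := by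
        by_cases hb : b < p.2
        · left
          refine ⟨hb, Finset.mem_erase.2 ⟨?_, (hYD.2 p hpD).2 hb⟩⟩
          intro heq
          obtain ⟨h1, h2⟩ := Prod.ext_iff.mp heq
          simp at h2
        · right
          have hpbb : p.2 = b := by omega
          have hpa' : a < p.1 := by
            rcases eq_or_lt_of_le hpa with h | h
            · exact absurd (prod_eq h.symm hpbb) hpo
            · exact h
          refine Finset.mem_erase.2 ⟨?_, (hYD.2 p hpD).1 hpa'⟩
          intro heq
          obtain ⟨h1, h2⟩ := Prod.ext_iff.mp heq
          simp at h1
      -- choose the insertion cell p'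
      have hne' : (C₂ \ D).Nonempty := by
        rw [← Finset.card_pos, Finset.card_sdiff_comm hcard.symm]
        exact Finset.card_pos.2 hne
      obtain ⟨p', hp'mem, hp'min⟩ := Finset.exists_min_image (C₂ \ D) (fun q => q.1 + q.2) hne'
      have hp'C₂ : p' ∈ C₂ := (Finset.mem_sdiff.1 hp'mem).1
      have hp'D : p' ∉ D := (Finset.mem_sdiff.1 hp'mem).2
      have hp'E : p' ∉ E := fun h => hp'D (Finset.mem_of_mem_erase h)
      have hp'o : p' ≠ ((a, b) : Cell) := fun h => hp'D (h ▸ hoD)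
      have hp'a : a ≤ p'.1 := (hY₂.1 p' hp'C₂).1
      have hp'b : b ≤ p'.2 := (hY₂.1 p' hp'C₂).2
      have hq1 : a < p'.1 → ((p'.1 - 1, p'.2) : Cell) ∈ E := by
        intro hx
        have h3 : ((p'.1 - 1, p'.2) : Cell) ∈ C₂ := (hY₂.2 _ hp'C₂).1 hx
        have h4 : ((p'.1 - 1, p'.2) : Cell) ∈ D := by
          by_contra h5
          have h6 := hp'min _ (Finset.mem_sdiff.2 ⟨h3, h5⟩)
          first
          | (simp at h6; omega)
          | simp at h6
        refine Finset.mem_erase.2 ⟨?_, h4⟩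
        intro heq
        exact hpC₂ (heq ▸ h3)
      have hq2 : b < p'.2 → ((p'.1, p'.2 - 1) : Cell) ∈ E := by
        intro hy
        have h3 : ((p'.1, p'.2 - 1) : Cell) ∈ C₂ := (hY₂.2 _ hp'C₂).2 hy
        have h4 : ((p'.1, p'.2 - 1) : Cell) ∈ D := by
          by_contra h5
          have h6 := hp'min _ (Finset.mem_sdiff.2 ⟨h3, h5⟩)
          first
          | (simp at h6; omega)
          | simp at h6
        refine Finset.mem_erase.2 ⟨?_, h4⟩
        intro heq
        exact hpC₂ (heq ▸ h3)
      have hinv_p' : (b < p'.2 ∧ ((p'.1, p'.2 - 1) : Cell) ∈ E) ∨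
          ((p'.1 - 1, p'.2) : Cell) ∈ E := by
        by_cases hb : b < p'.2
        · exact Or.inl ⟨hb, hq2 hb⟩
        · refine Or.inr (hq1 ?_)
          have hpbb : p'.2 = b := by omega
          rcases eq_or_lt_of_le hp'a with h | h
          · exact absurd (prod_eq h.symm hpbb) hp'o
          · exact h
      -- Young diagram after insertion
      have hYD₁ : Young a b (insert p' E) := by
        constructor
        · intro q hq
          rcases Finset.mem_insert.1 hq with rfl | hq'
          · exact ⟨hp'a, hp'b⟩
          · exact hYE.1 q hq'
        · intro q hq
          rcases Finset.mem_insert.1 hq with rfl | hq'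
          · exact ⟨fun hx => Finset.mem_insert_of_mem (hq1 hx),
              fun hy => Finset.mem_insert_of_mem (hq2 hy)⟩
          · exact ⟨fun hx => Finset.mem_insert_of_mem ((hYE.2 q hq').1 hx),
              fun hy => Finset.mem_insert_of_mem ((hYE.2 q hq').2 hy)⟩
      have hcardE : E.card + 1 = D.card := by
        rw [hEdef, Finset.card_erase_of_mem hpD]
        have : 1 ≤ D.card := Finset.card_pos.2 hDne
        omega
      have hcard₁ : (insert p' E).card = C₂.card := by
        rw [Finset.card_insert_of_notMem hp'E]
        omega
      have hBD₁ : ∀ q ∈ insert p' E, q.1 ≤ X ∧ q.2 ≤ Y := by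
        intro q hq
        rcases Finset.mem_insert.1 hq with rfl | hq'
        · exact hB₂ q hp'C₂
        · exact hBD q (Finset.mem_of_mem_erase hq')
      have hsd₁ : ((insert p' E) \ C₂).card ≤ r := by
        rw [Finset.insert_sdiff_of_mem _ hp'C₂]
        have hE : E \ C₂ = (D \ C₂).erase p := by
          ext q
          simp only [Finset.mem_sdiff, Finset.mem_erase, hEdef]
          tauto
        rw [hE, Finset.card_erase_of_mem hpmem]
        omega
      -- the two walks
      set M := ((X + 1 - a) + (Y - b)).toNat with hMdef
      obtain ⟨k₁, f₁, hk₁, hf₁0, hf₁k, hseq₁⟩ :=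
        walk_to_target hYE hEne hbXE M p hpE hinv_p
          (by have := (hBD p hpD).2; omega)
      obtain ⟨k₂, f₂, hk₂, hf₂0, hf₂k, hseq₂⟩ :=
        walk_to_target hYE hEne hbXE M p' hp'E hinv_p'
          (by have := (hB₂ p' hp'C₂).2; omega)
      have hrev := reconfig_reverse hseq₂
      obtain ⟨g, hseqg, hg0, hgk⟩ := reconfig_trans hseq₁ hrev (by
        simp only [Nat.sub_zero]
        rw [hf₁k, hf₂k])
      obtain ⟨k₃, f₃, hk₃, hf₃0, hf₃k, hseq₃⟩ := ih (insert p' E) hYD₁ hcard₁ hBD₁ hsd₁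
      obtain ⟨h, hseqh, hh0, hhk⟩ := reconfig_trans hseqg hseq₃ (by
        rw [hgk]
        simp only [Nat.sub_self]
        rw [hf₂0, hf₃0])
      refine ⟨k₁ + k₂ + k₃, h, ?_, ?_, ?_, hseqh⟩
      · have : k₁ + k₂ ≤ 2 * M := by omega
        calc k₁ + k₂ + k₃ ≤ 2 * M + 2 * M * r := by omega
        _ = 2 * M * (r + 1) := by ring
      · rw [hh0, hg0, hf₁0, hDins]
      · rw [hhk, hf₃k]
    · -- already equal
      have hD : D = C₂ := by
        have h1 : D \ C₂ = ∅ := Finset.not_nonempty_iff_eq_empty.mp hne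
        have h2 : D ⊆ C₂ := Finset.sdiff_eq_empty_iff_subset.mp h1
        exact Finset.eq_of_subset_of_card_le h2 (by omega)
      exact ⟨0, fun _ => C₂, by omega, by rw [hD], rfl, reconfig_zero h₂⟩

end XYT
namespace XYT

lemma minX_le {C : Finset Cell} {q : Cell} (hq : q ∈ C) : minX C ≤ q.1 :=
  csInf_le (C.finite_toSet.image Prod.fst).bddBelow ⟨q, hq, rfl⟩

lemma minY_le {C : Finset Cell} {q : Cell} (hq : q ∈ C) : minY C ≤ q.2 :=
  csInf_le (C.finite_toSet.image Prod.snd).bddBelow ⟨q, hq, rfl⟩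

lemma le_maxX {C : Finset Cell} {q : Cell} (hq : q ∈ C) : q.1 ≤ maxX C :=
  le_csSup (C.finite_toSet.image Prod.fst).bddAbove ⟨q, hq, rfl⟩

lemma le_maxY {C : Finset Cell} {q : Cell} (hq : q ∈ C) : q.2 ≤ maxY C :=
  le_csSup (C.finite_toSet.image Prod.snd).bddAbove ⟨q, hq, rfl⟩

lemma young_of_xyMonotone {C : Finset Cell} (h : XYMonotone C) :
    Young (minX C) (minY C) C := by
  refine ⟨fun q hq => ⟨minX_le hq, minY_le hq⟩, fun q hq => ⟨?_, ?_⟩⟩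
  · intro hx; exact (h q hq).1 (by omega)
  · intro hy; exact (h q hq).2 (by omega)

end XYT

theorem xy_monotone_transform_aux :
    ∃ c : ℕ, ∀ (C₁ C₂ : Finset Cell),
      EdgeConnected C₁ → EdgeConnected C₂ →
      XYMonotone C₁ → XYMonotone C₂ →
      C₁.card = C₂.card → minX C₁ = minX C₂ → minY C₁ = minY C₂ →
      ∃ (k : ℕ) (f : ℕ → Finset Cell),
        k ≤ c * max (perim C₁) (perim C₂) * C₁.card ∧
        f 0 = C₁ ∧ f k = C₂ ∧ ReconfigSeq k f := by
  refine ⟨4, ?_⟩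
  intro C₁ C₂ h₁ h₂ hm₁ hm₂ hcard hx hy
  set a := minX C₁ with ha
  set b := minY C₁ with hb
  have hY₁ : XYT.Young a b C₁ := XYT.young_of_xyMonotone hm₁
  have hY₂ : XYT.Young a b C₂ := by
    have := XYT.young_of_xyMonotone hm₂
    rw [← hx, ← hy] at this
    exact this
  set X := max (maxX C₁) (maxX C₂) with hX
  set Y := max (maxY C₁) (maxY C₂) with hY
  have hB₁ : ∀ q ∈ C₁, q.1 ≤ X ∧ q.2 ≤ Y := fun q hq =>
    ⟨le_trans (XYT.le_maxX hq) (le_max_left _ _), le_trans (XYT.le_maxY hq) (le_max_left _ _)⟩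
  have hB₂ : ∀ q ∈ C₂, q.1 ≤ X ∧ q.2 ≤ Y := fun q hq =>
    ⟨le_trans (XYT.le_maxX hq) (le_max_right _ _), le_trans (XYT.le_maxY hq) (le_max_right _ _)⟩
  obtain ⟨k, f, hk, hf0, hfk, hseq⟩ :=
    XYT.transform_aux hY₂ h₂ hB₂ C₁.card C₁ hY₁ hcard hB₁
      (Finset.card_le_card (Finset.sdiff_subset))
  refine ⟨k, f, ?_, hf0, hfk, hseq⟩
  -- arithmetic: 2 * M ≤ 4 * max perim
  obtain ⟨q₁, hq₁⟩ := h₁.1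
  obtain ⟨q₂, hq₂⟩ := h₂.1
  have hw1 : a ≤ maxX C₁ := le_trans (XYT.minX_le hq₁) (XYT.le_maxX hq₁)
  have hh1 : b ≤ maxY C₁ := le_trans (XYT.minY_le hq₁) (XYT.le_maxY hq₁)
  have hw2 : a ≤ maxX C₂ := by
    rw [hx]; exact le_trans (XYT.minX_le hq₂) (XYT.le_maxX hq₂)
  have hh2 : b ≤ maxY C₂ := by
    rw [hy]; exact le_trans (XYT.minY_le hq₂) (XYT.le_maxY hq₂)
  have hp1 : perim C₁ = 2 * ((maxX C₁ - a + 1).toNat + (maxY C₁ - b + 1).toNat) := rfl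
  have hp2 : perim C₂ = 2 * ((maxX C₂ - minX C₂ + 1).toNat + (maxY C₂ - minY C₂ + 1).toNat) := rfl
  rw [← hx, ← hy] at hp2
  have key : 2 * ((X + 1 - a) + (Y - b)).toNat ≤ 4 * max (perim C₁) (perim C₂) := by
    have hXc := max_choice (maxX C₁) (maxX C₂)
    have hYc := max_choice (maxY C₁) (maxY C₂)
    have hPc := max_choice (perim C₁) (perim C₂)
    have hP1 : perim C₁ ≤ max (perim C₁) (perim C₂) := le_max_left _ _
    have hP2 : perim C₂ ≤ max (perim C₁) (perim C₂) := le_max_right _ _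
    rw [← hX] at hXc
    rw [← hY] at hYc
    rcases hXc with hXc | hXc <;> rcases hYc with hYc | hYc <;>
      rcases hPc with hPc | hPc <;> omega
  calc k ≤ 2 * ((X + 1 - a) + (Y - b)).toNat * C₁.card := hk
    _ ≤ (4 * max (perim C₁) (perim C₂)) * C₁.card := Nat.mul_le_mul_right _ key
    _ = 4 * max (perim C₁) (perim C₂) * C₁.card := by ring

/-- transforming between xy-monotone configurations whose bounding
boxes share the bottom-left corner takes `O(P̄ n)` moves. -/
theorem xy_monotone_transform :
    ∃ c : ℕ, ∀ (C₁ C₂ : Finset Cell),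
      EdgeConnected C₁ → EdgeConnected C₂ →
      XYMonotone C₁ → XYMonotone C₂ →
      C₁.card = C₂.card → minX C₁ = minX C₂ → minY C₁ = minY C₂ →
      ∃ (k : ℕ) (f : ℕ → Finset Cell),
        k ≤ c * max (perim C₁) (perim C₂) * C₁.card ∧
        f 0 = C₁ ∧ f k = C₂ ∧ ReconfigSeq k f :=
  xy_monotone_transform_aux
end

section
/- There is a constant c > 0 such that for all integers n, x, y with x ≥ y ≥ 7, x ≤ n/2 and x · y ≥ 6n, there exist edge-connected configurations C and C' of n squares each, both contained in an x-column by y-row rectangle (so both bounding-box perimeters are at most P̄ = 2x + 2y), such that every reconfiguration sequence transforming C into any translate of C' consists of at least c · P̄ · n moves. -/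
section LowerBoundAux

open Finset

/-- Row-major filling cell. -/
def rmCell (x : ℕ) (i : ℕ) : Cell := (((i % x : ℕ) : ℤ), ((i / x : ℕ) : ℤ))
/-- Column-major filling cell. -/
def cmCell (y : ℕ) (i : ℕ) : Cell := (((i / y : ℕ) : ℤ), ((i % y : ℕ) : ℤ))

lemma rmCell_inj {x : ℕ} (hx : 0 < x) : Function.Injective (rmCell x) := by
  intro i j hij
  simp only [rmCell, Prod.mk.injEq] at hij
  have ha : i % x = j % x := Nat.cast_injective hij.1
  have hb : i / x = j / x := Nat.cast_injective hij.2
  have h1 : x * (i / x) + i % x = i := Nat.div_add_mod i x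
  rw [ha, hb, Nat.div_add_mod] at h1
  exact h1.symm

lemma cmCell_inj {y : ℕ} (hy : 0 < y) : Function.Injective (cmCell y) := by
  intro i j hij
  simp only [cmCell, Prod.mk.injEq] at hij
  have ha : i / y = j / y := Nat.cast_injective hij.1
  have hb : i % y = j % y := Nat.cast_injective hij.2
  have h1 : y * (i / y) + i % y = i := Nat.div_add_mod i y
  rw [ha, hb, Nat.div_add_mod] at h1
  exact h1.symm

lemma edgeAdj_symm {a b : Cell} (h : EdgeAdj a b) : EdgeAdj b a := by
  unfold EdgeAdj at h ⊢
  rw [abs_sub_comm b.1, abs_sub_comm b.2]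
  exact h

lemma reach_symm {C : Finset Cell} {a b : Cell} (h : Reach C a b) : Reach C b a :=
  by
    unfold Reach at h ⊢
    induction h with
    | refl => exact Relation.ReflTransGen.refl
    | tail _ hbc ih => exact Relation.ReflTransGen.head ⟨hbc.2.1, hbc.1, edgeAdj_symm hbc.2.2⟩ ih

lemma rm_mem {n x i : ℕ} (hi : i < n) :
    rmCell x i ∈ (range n).image (rmCell x) :=
  mem_image_of_mem _ (mem_range.mpr hi)

lemma cm_mem {n y i : ℕ} (hi : i < n) :
    cmCell y i ∈ (range n).image (cmCell y) :=
  mem_image_of_mem _ (mem_range.mpr hi)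

lemma reach_rm (x n : ℕ) (hx : 0 < x) :
    ∀ i, i < n → Reach ((range n).image (rmCell x)) (rmCell x i) (rmCell x 0) := by
  intro i
  induction i using Nat.strong_induction_on with
  | _ i IH =>
    intro hi
    rcases Nat.eq_zero_or_pos i with rfl | hpos
    · exact Relation.ReflTransGen.refl
    rcases lt_or_ge i x with hix | hxi
    · have hadj : EdgeAdj (rmCell x i) (rmCell x (i-1)) := by
        unfold EdgeAdj rmCell
        rw [Nat.mod_eq_of_lt hix, Nat.mod_eq_of_lt (by omega), Nat.div_eq_of_lt hix,
          Nat.div_eq_of_lt (by omega)]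
        have e1 : ((i:ℤ)) - ((i-1 : ℕ):ℤ) = 1 := by omega
        simp only [e1]
        simp
      exact Relation.ReflTransGen.head ⟨rm_mem hi, rm_mem (by omega), hadj⟩
        (IH (i-1) (by omega) (by omega))
    · obtain ⟨j, rfl⟩ : ∃ j, i = x + j := ⟨i - x, by omega⟩
      have h1 : (x + j) % x = j % x := Nat.add_mod_left x j
      have h2 : (x + j) / x = j / x + 1 := Nat.add_div_left j hx
      have hadj : EdgeAdj (rmCell x (x+j)) (rmCell x j) := by
        unfold EdgeAdj rmCell
        rw [h1, h2]
        have e1 : ((j % x : ℕ):ℤ) - ((j % x : ℕ):ℤ) = 0 := by ring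
        have e2 : ((j / x + 1 : ℕ):ℤ) - ((j / x : ℕ):ℤ) = 1 := by push_cast; ring
        simp only [e1, e2]
        simp
      exact Relation.ReflTransGen.head ⟨rm_mem hi, rm_mem (by omega), hadj⟩
        (IH j (by omega) (by omega))

lemma reach_cm (y n : ℕ) (hy : 0 < y) :
    ∀ i, i < n → Reach ((range n).image (cmCell y)) (cmCell y i) (cmCell y 0) := by
  intro i
  induction i using Nat.strong_induction_on with
  | _ i IH =>
    intro hi
    rcases Nat.eq_zero_or_pos i with rfl | hpos
    · exact Relation.ReflTransGen.refl
    rcases lt_or_ge i y with hiy | hyi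
    · have hadj : EdgeAdj (cmCell y i) (cmCell y (i-1)) := by
        unfold EdgeAdj cmCell
        rw [Nat.mod_eq_of_lt hiy, Nat.mod_eq_of_lt (by omega), Nat.div_eq_of_lt hiy,
          Nat.div_eq_of_lt (by omega)]
        have e1 : ((i:ℤ)) - ((i-1 : ℕ):ℤ) = 1 := by omega
        simp only [e1]
        simp
      exact Relation.ReflTransGen.head ⟨cm_mem hi, cm_mem (by omega), hadj⟩
        (IH (i-1) (by omega) (by omega))
    · obtain ⟨j, rfl⟩ : ∃ j, i = y + j := ⟨i - y, by omega⟩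
      have h1 : (y + j) % y = j % y := Nat.add_mod_left y j
      have h2 : (y + j) / y = j / y + 1 := Nat.add_div_left j hy
      have hadj : EdgeAdj (cmCell y (y+j)) (cmCell y j) := by
        unfold EdgeAdj cmCell
        rw [h1, h2]
        have e1 : ((j % y : ℕ):ℤ) - ((j % y : ℕ):ℤ) = 0 := by ring
        have e2 : ((j / y + 1 : ℕ):ℤ) - ((j / y : ℕ):ℤ) = 1 := by push_cast; ring
        simp only [e1, e2]
        simp
      exact Relation.ReflTransGen.head ⟨cm_mem hi, cm_mem (by omega), hadj⟩
        (IH j (by omega) (by omega))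

lemma ec_rm (x n : ℕ) (hx : 0 < x) (hn : 0 < n) :
    EdgeConnected ((range n).image (rmCell x)) := by
  refine ⟨⟨rmCell x 0, rm_mem hn⟩, ?_⟩
  intro a ha b hb
  obtain ⟨i, hi, rfl⟩ := mem_image.mp ha
  obtain ⟨j, hj, rfl⟩ := mem_image.mp hb
  exact (reach_rm x n hx i (mem_range.mp hi)).trans
    (reach_symm (reach_rm x n hx j (mem_range.mp hj)))

lemma ec_cm (y n : ℕ) (hy : 0 < y) (hn : 0 < n) :
    EdgeConnected ((range n).image (cmCell y)) := by
  refine ⟨⟨cmCell y 0, cm_mem hn⟩, ?_⟩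
  intro a ha b hb
  obtain ⟨i, hi, rfl⟩ := mem_image.mp ha
  obtain ⟨j, hj, rfl⟩ := mem_image.mp hb
  exact (reach_cm y n hy i (mem_range.mp hi)).trans
    (reach_symm (reach_cm y n hy j (mem_range.mp hj)))

/-- The potential: sum of pairwise horizontal distances. -/
def Phi (D : Finset Cell) : ℤ := ∑ p ∈ D, ∑ q ∈ D, |p.1 - q.1|

lemma Phi_insert {E : Finset Cell} {a : Cell} (ha : a ∉ E) :
    Phi (insert a E) = Phi E + 2 * ∑ u ∈ E, |a.1 - u.1| := by
  unfold Phi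
  rw [Finset.sum_insert ha, Finset.sum_insert ha]
  rw [Finset.sum_congr rfl (fun p (_ : p ∈ E) => Finset.sum_insert ha)]
  rw [Finset.sum_add_distrib]
  have h2 : ∑ p ∈ E, |p.1 - a.1| = ∑ u ∈ E, |a.1 - u.1| :=
    Finset.sum_congr rfl (fun p _ => abs_sub_comm _ _)
  rw [h2]
  simp only [sub_self, abs_zero]
  ring

lemma Phi_pair_bound {E : Finset Cell} {a b : Cell} (ha : a ∉ E) (hb : b ∉ E)
    (h1 : |b.1 - a.1| ≤ 1) :
    |Phi (insert b E) - Phi (insert a E)| ≤ 2 * E.card := by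
  rw [Phi_insert ha, Phi_insert hb]
  have e : Phi E + 2 * ∑ u ∈ E, |b.1 - u.1| - (Phi E + 2 * ∑ u ∈ E, |a.1 - u.1|)
      = 2 * ∑ u ∈ E, (|b.1 - u.1| - |a.1 - u.1|) := by
    rw [Finset.sum_sub_distrib]; ring
  rw [e, abs_mul]
  have h2 : |∑ u ∈ E, (|b.1 - u.1| - |a.1 - u.1|)|
      ≤ ∑ u ∈ E, |(|b.1 - u.1| - |a.1 - u.1|)| := Finset.abs_sum_le_sum_abs _ _
  have h3 : ∑ u ∈ E, |(|b.1 - u.1| - |a.1 - u.1|)| ≤ ∑ _u ∈ E, (1:ℤ) := by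
    refine Finset.sum_le_sum (fun u _ => ?_)
    calc |(|b.1 - u.1| - |a.1 - u.1|)| ≤ |(b.1 - u.1) - (a.1 - u.1)| :=
          abs_abs_sub_abs_le_abs_sub _ _
      _ = |b.1 - a.1| := by ring_nf
      _ ≤ 1 := h1
  rw [Finset.sum_const, nsmul_eq_mul, mul_one] at h3
  have : |(2:ℤ)| = 2 := by norm_num
  rw [this]
  linarith

lemma move_fst_bound {C : Finset Cell} {c c' : Cell}
    (h : SlideMove C c c' ∨ ConvexMove C c c') :
    c ∈ C ∧ c' ∉ C ∧ |c'.1 - c.1| ≤ 1 := by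
  rcases h with ⟨hc, hc', d, hd, rfl, -⟩ | ⟨hc, hc', d, e, hd, he, horth, rfl, -⟩
  · refine ⟨hc, hc', ?_⟩
    rcases hd with rfl | rfl | rfl | rfl <;> simp [Prod.fst_add]
  · refine ⟨hc, hc', ?_⟩
    rcases hd with rfl | rfl | rfl | rfl <;> rcases he with rfl | rfl | rfl | rfl <;>
      simp_all [Orth, Prod.fst_add]

lemma moveStep_bound {D D' : Finset Cell} (h : MoveStep D D') :
    D'.card = D.card ∧ |Phi D' - Phi D| ≤ 2 * D.card := by
  obtain ⟨c, c', hm, rfl⟩ := h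
  obtain ⟨hc, hc', hle⟩ := move_fst_bound hm
  have hcE : c ∉ D.erase c := Finset.notMem_erase c D
  have hc'E : c' ∉ D.erase c := fun hmem => hc' (Finset.mem_of_mem_erase hmem)
  have hpos : 0 < D.card := Finset.card_pos.mpr ⟨c, hc⟩
  constructor
  · show (insert c' (D.erase c)).card = D.card
    rw [Finset.card_insert_of_notMem hc'E, Finset.card_erase_of_mem hc]
    omega
  · have key := Phi_pair_bound hcE hc'E hle
    rw [Finset.insert_erase hc] at key
    refine le_trans key ?_
    have : (D.erase c).card ≤ D.card := Finset.card_erase_le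
    have : ((D.erase c).card : ℤ) ≤ (D.card : ℤ) := by exact_mod_cast this
    linarith

lemma phi_seq {f : ℕ → Finset Cell} {n : ℕ} (h0 : (f 0).card = n) :
    ∀ k, (∀ i < k, MoveStep (f i) (f (i+1))) →
      (f k).card = n ∧ |Phi (f k) - Phi (f 0)| ≤ 2 * n * k := by
  intro k
  induction k with
  | zero => intro _; exact ⟨h0, by simp⟩
  | succ k IH =>
    intro hs
    obtain ⟨hcard, hphi⟩ := IH (fun i hi => hs i (by omega))
    obtain ⟨hc2, hp2⟩ := moveStep_bound (hs k (by omega))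
    refine ⟨by rw [hc2, hcard], ?_⟩
    have htri := abs_sub_le (Phi (f (k+1))) (Phi (f k)) (Phi (f 0))
    rw [hcard] at hp2
    push_cast at hphi hp2 ⊢
    linarith

lemma phi_translate (D : Finset Cell) (v : Cell) : Phi (translateConf D v) = Phi D := by
  unfold Phi translateConf
  rw [Finset.sum_image (fun a _ b _ h => by exact add_right_cancel h)]
  refine Finset.sum_congr rfl (fun p _ => ?_)
  rw [Finset.sum_image (fun a _ b _ h => by exact add_right_cancel h)]
  refine Finset.sum_congr rfl (fun q _ => ?_)
  have : (p + v).1 - (q + v).1 = p.1 - q.1 := by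
    simp [Prod.fst_add]
  rw [this]

end LowerBoundAux

section LowerBoundArith

open Finset

lemma gauss (x : ℕ) : 2 * ∑ s ∈ range x, (s:ℤ) = (x:ℤ)^2 - x := by
  induction x with
  | zero => simp
  | succ x IH =>
    rw [Finset.sum_range_succ]
    push_cast
    push_cast at IH
    ring_nf
    ring_nf at IH
    linarith

/-- sum of pairwise distances on a discrete interval -/
def Ssum (x : ℕ) : ℤ := ∑ s ∈ range x, ∑ t ∈ range x, |(s:ℤ) - t|

lemma Ssum_eq (x : ℕ) : 3 * Ssum x = (x:ℤ)^3 - x := by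
  induction x with
  | zero => simp [Ssum]
  | succ x IH =>
    unfold Ssum at IH ⊢
    simp only [Finset.sum_range_succ]
    rw [Finset.sum_add_distrib]
    have habs1 : ∀ s ∈ range x, |(s:ℤ) - x| = (x:ℤ) - s := by
      intro s hs
      rw [abs_sub_comm]
      exact abs_of_nonneg (by have := mem_range.mp hs; push_cast; omega)
    have habs2 : ∀ t ∈ range x, |(x:ℤ) - t| = (x:ℤ) - t := by
      intro t ht
      exact abs_of_nonneg (by have := mem_range.mp ht; push_cast; omega)
    have e1 : ∑ s ∈ range x, |(s:ℤ) - x| = (x:ℤ) * x - ∑ s ∈ range x, (s:ℤ) := by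
      rw [Finset.sum_congr rfl habs1, Finset.sum_sub_distrib, Finset.sum_const,
        card_range, nsmul_eq_mul]
    have e2 : ∑ t ∈ range x, |(x:ℤ) - t| = (x:ℤ) * x - ∑ t ∈ range x, (t:ℤ) := by
      rw [Finset.sum_congr rfl habs2, Finset.sum_sub_distrib, Finset.sum_const,
        card_range, nsmul_eq_mul]
    have e3 := gauss x
    rw [e1, e2]
    push_cast
    simp only [sub_self, abs_zero]
    ring_nf
    ring_nf at IH e3
    linarith

lemma oddsum : ∀ x : ℕ, (x:ℤ)^2 - 1 ≤ 2 * ∑ t ∈ range x, |(x:ℤ) - 1 - 2*t|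
  | 0 => by simp
  | 1 => by norm_num
  | (x+2) => by
    have IH := oddsum x
    have e : ∑ t ∈ range (x+2), |((x:ℤ)+2) - 1 - 2*t|
        = ∑ t ∈ range x, |(x:ℤ) - 1 - 2*t| + (2*(x:ℤ)+2) := by
      rw [Finset.sum_range_succ' _ (x+1)]
      have hcong : ∀ t ∈ range (x+1),
          |((x:ℤ)+2) - 1 - 2*((t:ℤ)+1)| = |(x:ℤ) - 1 - 2*t| := by
        intro t _
        congr 1
        push_cast
        ring
      have hc2 : ∀ t ∈ range (x+1),
          |((x:ℤ)+2) - 1 - 2*(((t+1):ℕ):ℤ)| = |(x:ℤ) - 1 - 2*t| := by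
        intro t ht
        have := hcong t ht
        push_cast
        push_cast at this
        exact this
      rw [Finset.sum_congr rfl hc2, Finset.sum_range_succ]
      have h1 : |(x:ℤ) - 1 - 2*((x:ℕ):ℤ)| = (x:ℤ) + 1 := by
        rw [abs_sub_comm]
        have : (2*((x:ℕ):ℤ)) - ((x:ℤ) - 1) = (x:ℤ) + 1 := by push_cast; ring
        rw [show (2*((x:ℕ):ℤ) : ℤ) = 2*(x:ℤ) from by push_cast; ring] at *
        rw [show |2*(x:ℤ) - ((x:ℤ)-1)| = |(x:ℤ)+1| from by ring_nf]
        exact abs_of_nonneg (by positivity)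
      have h0 : |((x:ℤ)+2) - 1 - 2*((0:ℕ):ℤ)| = (x:ℤ) + 1 := by
        rw [show ((x:ℤ)+2) - 1 - 2*((0:ℕ):ℤ) = (x:ℤ)+1 from by push_cast; ring]
        exact abs_of_nonneg (by positivity)
      rw [h1, h0]
      ring
    have ecast : ∑ t ∈ range (x+2), |(((x+2:ℕ)):ℤ) - 1 - 2*t|
        = ∑ t ∈ range (x+2), |((x:ℤ)+2) - 1 - 2*t| := by
      refine Finset.sum_congr rfl (fun t _ => by congr 1 <;> push_cast <;> ring)
    rw [ecast, e]
    push_cast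
    push_cast at IH
    nlinarith [IH]

lemma Tbound {x s : ℕ} (hs : s < x) :
    (x:ℤ)^2 - 1 ≤ 4 * ∑ t ∈ range x, |(s:ℤ) - t| := by
  have hrefl : ∑ t ∈ range x, |(s:ℤ) - ((x - 1 - t : ℕ):ℤ)|
      = ∑ t ∈ range x, |(s:ℤ) - t| := Finset.sum_range_reflect (fun t => |(s:ℤ) - t|) x
  have key : ∀ t ∈ range x,
      |((x:ℤ) - 1 - 2*t)| ≤ |(s:ℤ) - t| + |(s:ℤ) - ((x-1-t : ℕ):ℤ)| := by
    intro t ht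
    have htx := mem_range.mp ht
    have h1 : ((x-1-t : ℕ):ℤ) = (x:ℤ) - 1 - t := by omega
    rw [h1]
    have tri := abs_sub_le ((x:ℤ)-1-(t:ℤ)) ((s:ℕ):ℤ) ((t:ℕ):ℤ)
    have c1 : |((x:ℤ) - 1 - 2*t)| = |((x:ℤ)-1-(t:ℤ)) - (t:ℤ)| := by ring_nf
    have c2 : |((x:ℤ)-1-(t:ℤ)) - (s:ℤ)| = |(s:ℤ) - ((x:ℤ)-1-(t:ℤ))| := abs_sub_comm _ _
    rw [c1]
    calc |((x:ℤ)-1-(t:ℤ)) - (t:ℤ)|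
        ≤ |((x:ℤ)-1-(t:ℤ)) - (s:ℤ)| + |(s:ℤ) - t| := tri
      _ = |(s:ℤ) - ((x:ℤ)-1-(t:ℤ))| + |(s:ℤ) - t| := by rw [c2]
      _ = |(s:ℤ) - t| + |(s:ℤ) - ((x:ℤ)-1-(t:ℤ))| := by ring
  have h2 : 2 * ∑ t ∈ range x, |(s:ℤ) - t|
      = ∑ t ∈ range x, (|(s:ℤ) - t| + |(s:ℤ) - ((x-1-t:ℕ):ℤ)|) := by
    rw [Finset.sum_add_distrib, hrefl]
    ring
  have h3 : ∑ t ∈ range x, |((x:ℤ) - 1 - 2*t)| ≤ 2 * ∑ t ∈ range x, |(s:ℤ) - t| := by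
    rw [h2]
    exact Finset.sum_le_sum key
  have h4 := oddsum x
  linarith

lemma sum_mod_eq (x : ℕ) (hx : 0 < x) (F : ℕ → ℤ) (n : ℕ) :
    ∑ i ∈ range n, F (i % x)
      = ((n / x : ℕ):ℤ) * ∑ s ∈ range x, F s + ∑ t ∈ range (n % x), F t := by
  induction n with
  | zero => simp
  | succ n IH =>
    rw [Finset.sum_range_succ, IH]
    have hmlt : n % x < x := Nat.mod_lt n hx
    have hdm := Nat.div_add_mod n x
    by_cases h : n % x + 1 = x
    · have hnx : n + 1 = (n/x + 1) * x := by
        have hq : (n/x + 1) * x = x * (n/x) + x := by ring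
        rw [hq]; omega
      have hm : (n+1) % x = 0 := by rw [hnx]; exact Nat.mul_mod_left _ _
      have hd : (n+1) / x = n/x + 1 := by rw [hnx]; exact Nat.mul_div_cancel _ hx
      rw [hm, hd]
      have hS : ∑ t ∈ range (n % x), F t + F (n % x) = ∑ s ∈ range x, F s := by
        rw [← Finset.sum_range_succ, h]
      simp only [Nat.cast_add, Nat.cast_one, Finset.range_zero, Finset.sum_empty,
        add_zero]
      linarith [hS]
    · have hnx : n + 1 = x * (n/x) + (n % x + 1) := by omega
      have hlt : n % x + 1 < x := by omega
      have hm : (n+1) % x = n % x + 1 := by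
        rw [hnx, Nat.mul_add_mod]
        exact Nat.mod_eq_of_lt hlt
      have hd : (n+1) / x = n / x := by
        rw [hnx, Nat.mul_add_div hx, Nat.div_eq_of_lt hlt]
        omega
      rw [hm, hd, Finset.sum_range_succ]
      ring

end LowerBoundArith

section LowerBoundMain

open Finset

lemma A_bound (n x : ℕ) (hx : 0 < x) :
    ((x:ℤ)^2 - 1) * ((n / x : ℕ):ℤ) * (n:ℤ)
      ≤ 3 * ∑ i ∈ range n, ∑ j ∈ range n, |((i % x : ℕ):ℤ) - ((j % x : ℕ):ℤ)| := by
  have hrx : n % x < x := Nat.mod_lt n hx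
  have hinner : ∀ i : ℕ,
      ∑ j ∈ range n, |((i % x : ℕ):ℤ) - ((j % x : ℕ):ℤ)|
        = ((n / x : ℕ):ℤ) * (∑ s ∈ range x, |((i % x : ℕ):ℤ) - (s:ℤ)|)
          + ∑ t ∈ range (n % x), |((i % x : ℕ):ℤ) - (t:ℤ)| := by
    intro i
    exact sum_mod_eq x hx (fun t => |((i % x : ℕ):ℤ) - (t:ℤ)|) n
  rw [Finset.sum_congr rfl (fun i _ => hinner i), Finset.sum_add_distrib, ← Finset.mul_sum]
  have e1 := sum_mod_eq x hx (fun s => ∑ t ∈ range x, |(s:ℤ) - (t:ℤ)|) n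
  have e2 := sum_mod_eq x hx (fun s => ∑ t ∈ range (n % x), |(s:ℤ) - (t:ℤ)|) n
  rw [e1, e2]
  have e3 : ∑ s ∈ range x, ∑ t ∈ range (n % x), |(s:ℤ) - (t:ℤ)|
      = ∑ s ∈ range (n % x), ∑ t ∈ range x, |(s:ℤ) - (t:ℤ)| := by
    rw [Finset.sum_comm]
    exact Finset.sum_congr rfl (fun t _ => Finset.sum_congr rfl
      (fun s _ => abs_sub_comm _ _))
  rw [e3]
  have SE := Ssum_eq x
  have hST : (0:ℤ) ≤ ∑ s ∈ range (n % x), ∑ t ∈ range x, |(s:ℤ) - (t:ℤ)| := by positivity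
  have hSr : (0:ℤ) ≤ ∑ s ∈ range (n % x), ∑ t ∈ range (n % x), |(s:ℤ) - (t:ℤ)| := by
    positivity
  have TB : ((x:ℤ)^2 - 1) * ((n % x : ℕ):ℤ)
      ≤ 4 * ∑ s ∈ range (n % x), ∑ t ∈ range x, |(s:ℤ) - (t:ℤ)| := by
    have := Finset.sum_le_sum (f := fun _ : ℕ => (x:ℤ)^2 - 1)
      (g := fun s : ℕ => 4 * ∑ t ∈ range x, |(s:ℤ) - (t:ℤ)|)
      (s := range (n % x)) (fun s hs => Tbound (lt_trans (mem_range.mp hs) hrx))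
    rw [Finset.sum_const, card_range, nsmul_eq_mul, ← Finset.mul_sum] at this
    linarith
  have hdm : ((n:ℕ):ℤ) = (x:ℤ) * ((n / x : ℕ):ℤ) + ((n % x : ℕ):ℤ) := by
    exact_mod_cast congrArg (Nat.cast : ℕ → ℤ) (Nat.div_add_mod n x).symm
  have hH : (0:ℤ) ≤ ((n / x : ℕ):ℤ) := by positivity
  have hR : (0:ℤ) ≤ ((n % x : ℕ):ℤ) := by positivity
  have hx1 : (1:ℤ) ≤ (x:ℤ) := by exact_mod_cast hx
  have p1 : ((n / x : ℕ):ℤ) * (((x:ℤ)^2 - 1) * ((n % x : ℕ):ℤ))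
      ≤ ((n / x : ℕ):ℤ) * (4 * ∑ s ∈ range (n % x), ∑ t ∈ range x, |(s:ℤ) - (t:ℤ)|) :=
    mul_le_mul_of_nonneg_left TB hH
  have p2 : (0:ℤ) ≤ ((n / x : ℕ):ℤ) * ∑ s ∈ range (n % x), ∑ t ∈ range x, |(s:ℤ) - (t:ℤ)| :=
    mul_nonneg hH hST
  have p3 : ((n / x : ℕ):ℤ)^2 * (3 * Ssum x) = ((n / x : ℕ):ℤ)^2 * ((x:ℤ)^3 - x) := by
    rw [SE]
  rw [hdm]
  unfold Ssum at p3
  nlinarith [p1, p2, p3, hSr]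

end LowerBoundMain

set_option maxHeartbeats 2000000
/-- lower bound. There are pairs of configurations in an
`x × y` rectangle that require `Ω(P̄ n)` moves. -/
theorem lower_bound_Pn :
    ∃ c : ℝ, 0 < c ∧ ∀ n x y : ℕ, 7 ≤ y → y ≤ x → 2 * x ≤ n → 6 * n ≤ x * y →
      ∃ C C' : Finset Cell,
        EdgeConnected C ∧ EdgeConnected C' ∧ C.card = n ∧ C'.card = n ∧
        (∀ q ∈ C, 0 ≤ q.1 ∧ q.1 < (x : ℤ) ∧ 0 ≤ q.2 ∧ q.2 < (y : ℤ)) ∧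
        (∀ q ∈ C', 0 ≤ q.1 ∧ q.1 < (x : ℤ) ∧ 0 ≤ q.2 ∧ q.2 < (y : ℤ)) ∧
        ∀ (v : Cell) (k : ℕ) (f : ℕ → Finset Cell),
          f 0 = C → f k = translateConf C' v → ReconfigSeq k f →
          c * ((2 * x + 2 * y : ℕ) : ℝ) * (n : ℝ) ≤ (k : ℝ) := by
  classical
  refine ⟨1/144, by norm_num, ?_⟩
  intro n x y h7 hyx h2x h6n
  have hx : 0 < x := by omega
  have hy : 0 < y := by omega
  have hn : 0 < n := by omega
  have hnxy : n ≤ x * y := by omega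
  refine ⟨(Finset.range n).image (rmCell x), (Finset.range n).image (cmCell y),
    ec_rm x n hx hn, ec_cm y n hy hn, ?_, ?_, ?_, ?_, ?_⟩
  · rw [Finset.card_image_of_injective _ (rmCell_inj hx), Finset.card_range]
  · rw [Finset.card_image_of_injective _ (cmCell_inj hy), Finset.card_range]
  · intro q hq
    obtain ⟨i, hi, rfl⟩ := Finset.mem_image.mp hq
    have hi' := Finset.mem_range.mp hi
    have hm : i % x < x := Nat.mod_lt i hx
    have hd : i / x < y := Nat.div_lt_of_lt_mul (by omega)
    refine ⟨?_, ?_, ?_, ?_⟩ <;> simp only [rmCell]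
    · exact Int.natCast_nonneg _
    · exact_mod_cast hm
    · exact Int.natCast_nonneg _
    · exact_mod_cast hd
  · intro q hq
    obtain ⟨i, hi, rfl⟩ := Finset.mem_image.mp hq
    have hi' := Finset.mem_range.mp hi
    have hm : i % y < y := Nat.mod_lt i hy
    have hd : i / y < x := Nat.div_lt_of_lt_mul
      (by have hc : y * x = x * y := Nat.mul_comm y x; omega)
    refine ⟨?_, ?_, ?_, ?_⟩ <;> simp only [cmCell]
    · exact Int.natCast_nonneg _
    · exact_mod_cast hd
    · exact Int.natCast_nonneg _
    · exact_mod_cast hm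
  · intro v k f hf0 hfk hseq
    obtain ⟨hsteps, _⟩ := hseq
    have hcard0 : (f 0).card = n := by
      rw [hf0, Finset.card_image_of_injective _ (rmCell_inj hx), Finset.card_range]
    obtain ⟨-, hphik⟩ := phi_seq hcard0 k hsteps
    rw [hf0, hfk, phi_translate] at hphik
    -- evaluate Phi of the two configurations
    have hPA : Phi ((Finset.range n).image (rmCell x))
        = ∑ i ∈ Finset.range n, ∑ j ∈ Finset.range n,
            |((i % x : ℕ):ℤ) - ((j % x : ℕ):ℤ)| := by
      unfold Phi
      rw [Finset.sum_image (fun a _ b _ h => rmCell_inj hx h)]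
      refine Finset.sum_congr rfl (fun i _ => ?_)
      rw [Finset.sum_image (fun a _ b _ h => rmCell_inj hx h)]
      rfl
    have hA := A_bound n x hx
    rw [← hPA] at hA
    -- upper bound for Phi C'
    have hPB : Phi ((Finset.range n).image (cmCell y))
        ≤ (n:ℤ) * ((n:ℤ) * (((n-1) / y : ℕ):ℤ)) := by
      unfold Phi
      rw [Finset.sum_image (fun a _ b _ h => cmCell_inj hy h)]
      have hterm : ∀ i ∈ Finset.range n,
          ∑ q ∈ (Finset.range n).image (cmCell y), |(cmCell y i).1 - q.1|
            ≤ (n:ℤ) * (((n-1) / y : ℕ):ℤ) := by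
        intro i hi
        rw [Finset.sum_image (fun a _ b _ h => cmCell_inj hy h)]
        have hterm2 : ∀ j ∈ Finset.range n,
            |(cmCell y i).1 - (cmCell y j).1| ≤ (((n-1) / y : ℕ):ℤ) := by
          intro j hj
          have hiW : i / y ≤ (n-1) / y :=
            Nat.div_le_div_right (by have := Finset.mem_range.mp hi; omega)
          have hjW : j / y ≤ (n-1) / y :=
            Nat.div_le_div_right (by have := Finset.mem_range.mp hj; omega)
          show |((i / y : ℕ):ℤ) - ((j / y : ℕ):ℤ)| ≤ (((n-1) / y : ℕ):ℤ)
          rw [abs_le]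
          constructor
          · have h1 : ((i / y : ℕ):ℤ) ≥ 0 := Int.natCast_nonneg _
            have h2 : ((j / y : ℕ):ℤ) ≤ (((n-1) / y : ℕ):ℤ) := by exact_mod_cast hjW
            linarith
          · have h1 : ((j / y : ℕ):ℤ) ≥ 0 := Int.natCast_nonneg _
            have h2 : ((i / y : ℕ):ℤ) ≤ (((n-1) / y : ℕ):ℤ) := by exact_mod_cast hiW
            linarith
        calc ∑ j ∈ Finset.range n, |(cmCell y i).1 - (cmCell y j).1|
            ≤ ∑ _j ∈ Finset.range n, (((n-1) / y : ℕ):ℤ) := Finset.sum_le_sum hterm2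
          _ = (n:ℤ) * (((n-1) / y : ℕ):ℤ) := by
              rw [Finset.sum_const, Finset.card_range, nsmul_eq_mul]
      calc ∑ i ∈ Finset.range n,
            ∑ q ∈ (Finset.range n).image (cmCell y), |(cmCell y i).1 - q.1|
          ≤ ∑ _i ∈ Finset.range n, (n:ℤ) * (((n-1) / y : ℕ):ℤ) :=
            Finset.sum_le_sum hterm
        _ = (n:ℤ) * ((n:ℤ) * (((n-1) / y : ℕ):ℤ)) := by
            rw [Finset.sum_const, Finset.card_range, nsmul_eq_mul]
    -- integer estimates
    have h2h : 2 ≤ n / x := (Nat.le_div_iff_mul_le hx).mpr (by omega)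
    have hdm := Nat.div_add_mod n x
    have hrx : n % x < x := Nat.mod_lt n hx
    have h3hx : 2 * n ≤ 3 * ((n / x) * x) := by
      have e : 2 * x ≤ x * (n / x) := by
        calc 2 * x = x * 2 := by ring
          _ ≤ x * (n / x) := Nat.mul_le_mul_left x h2h
      have e2 : (n / x) * x = x * (n / x) := by ring
      omega
    have hWb : 6 * ((n-1) / y) + 1 ≤ x := by
      by_contra hcon
      push_neg at hcon
      have hx6 : x ≤ 6 * ((n-1) / y) := by omega
      have hyW : (n-1) / y * y ≤ n - 1 := Nat.div_mul_le_self _ _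
      have hmul : x * y ≤ (6 * ((n-1) / y)) * y := Nat.mul_le_mul_right y hx6
      have e2 : (6 * ((n-1) / y)) * y = 6 * ((n-1) / y * y) := by ring
      omega
    have htelA : Phi ((Finset.range n).image (rmCell x))
        - Phi ((Finset.range n).image (cmCell y)) ≤ 2*(n:ℤ)*k := by
      have := (abs_le.mp hphik).1
      linarith
    -- final integer inequality
    have hxZ : (1:ℤ) ≤ (x:ℤ) := by exact_mod_cast hx
    have hnZ : (1:ℤ) ≤ (n:ℤ) := by exact_mod_cast hn
    have hkZ : (0:ℤ) ≤ (k:ℤ) := Int.natCast_nonneg _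
    have hx7 : (7:ℤ) ≤ (x:ℤ) := by exact_mod_cast (by omega : 7 ≤ x)
    have h3hxZ : 2 * (n:ℤ) ≤ 3 * (((n / x : ℕ):ℤ) * (x:ℤ)) := by exact_mod_cast h3hx
    have hWbZ : 6 * (((n-1) / y : ℕ):ℤ) + 1 ≤ (x:ℤ) := by exact_mod_cast hWb
    set A := Phi ((Finset.range n).image (rmCell x)) with hAdef
    set B := Phi ((Finset.range n).image (cmCell y)) with hBdef
    set H := ((n / x : ℕ):ℤ) with hHdef
    set W := (((n-1) / y : ℕ):ℤ) with hWdef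
    have hHZ : (0:ℤ) ≤ H := Int.natCast_nonneg _
    have hWZ : (0:ℤ) ≤ W := Int.natCast_nonneg _
    have q1 : 12*(n:ℤ)^2*((x:ℤ)^2 - 1) ≤ 54*(x:ℤ)*A := by
      have m1 : 18*(x:ℤ) * (((x:ℤ)^2 - 1) * H * (n:ℤ)) ≤ 18*(x:ℤ) * (3*A) :=
        mul_le_mul_of_nonneg_left hA (by positivity)
      have m2 : (0:ℤ) ≤ ((x:ℤ)^2 - 1) * (n:ℤ) :=
        mul_nonneg (by nlinarith [hxZ]) (by linarith)
      have m3 : (((x:ℤ)^2 - 1) * (n:ℤ)) * (2*(n:ℤ))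
          ≤ (((x:ℤ)^2 - 1) * (n:ℤ)) * (3*(H*(x:ℤ))) :=
        mul_le_mul_of_nonneg_left h3hxZ m2
      linarith [m1, m3]
    have q2 : 54*(x:ℤ)*B ≤ 9*(x:ℤ)*(n:ℤ)^2*((x:ℤ) - 1) := by
      have m4 : 54*(x:ℤ)*B ≤ 54*(x:ℤ)*((n:ℤ) * ((n:ℤ) * W)) :=
        mul_le_mul_of_nonneg_left hPB (by positivity)
      have m5 : (9*(x:ℤ)*(n:ℤ)^2) * (6*W) ≤ (9*(x:ℤ)*(n:ℤ)^2) * ((x:ℤ) - 1) :=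
        mul_le_mul_of_nonneg_left (by linarith) (by positivity)
      linarith [m4, m5]
    have q3 : 3*(n:ℤ)^2*(x:ℤ)^2 ≤ 108*(x:ℤ)*(n:ℤ)*(k:ℤ) := by
      have m6 : 54*(x:ℤ)*(A - B) ≤ 54*(x:ℤ)*(2*(n:ℤ)*(k:ℤ)) :=
        mul_le_mul_of_nonneg_left htelA (by positivity)
      have m7 : 12*(n:ℤ)^2 ≤ 9*(n:ℤ)^2*(x:ℤ) := by nlinarith [hx7, sq_nonneg (n:ℤ)]
      linarith [q1, q2, m6, m7]
    have hfin : (n:ℤ) * (x:ℤ) ≤ 36*(k:ℤ) := by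
      nlinarith [q3, mul_pos (by linarith : (0:ℤ) < (n:ℤ)) (by linarith : (0:ℤ) < (x:ℤ))]
    -- conclude over ℝ
    have hfinN : n * x ≤ 36 * k := by exact_mod_cast hfin
    have hcast : ((2*x + 2*y : ℕ):ℝ) * (n:ℝ) ≤ 144 * (k:ℝ) := by
      have h1 : (2*x + 2*y) * n ≤ 144 * k := by
        calc (2*x + 2*y) * n ≤ (4*x) * n := by
              apply Nat.mul_le_mul_right
              omega
          _ = 4 * (n * x) := by ring
          _ ≤ 4 * (36 * k) := by omega
          _ = 144 * k := by ring
      exact_mod_cast h1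
    rw [div_mul_eq_mul_div, div_mul_eq_mul_div, div_le_iff₀ (by norm_num : (0:ℝ) < 144)]
    calc 1 * ((2 * x + 2 * y : ℕ):ℝ) * (n:ℝ) = ((2*x + 2*y : ℕ):ℝ) * (n:ℝ) := by ring
      _ ≤ 144 * (k:ℝ) := hcast
      _ = (k:ℝ) * 144 := by ring
end

section
/- Every LM-move of a square from a cell (x, y) to a cell (x', y') satisfies 2x' + y' ≤ 2x + y − 1, x' ≤ x, and x' + y' ≤ x + y. Consequently, if a square starts at cell (x, y) and performs an arbitrary sequence of LM-moves, its position (x', y') after each move satisfies x' ≤ x and y' ≤ x − x' + y. -/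
/-- every LM-move decreases `2x + y` by at least one, never moves
east, and never increases `x + y`; hence a square performing LM-moves stays in
the region `x' ≤ x`, `y' ≤ x - x' + y`. -/
theorem lm_move_monotonicity :
    (∀ (C : Finset Cell) (c c' : Cell), IsLMMove C c c' →
      2 * c'.1 + c'.2 ≤ 2 * c.1 + c.2 - 1 ∧ c'.1 ≤ c.1 ∧ c'.1 + c'.2 ≤ c.1 + c.2) ∧
    (∀ (m : ℕ) (p : ℕ → Cell),
      (∀ i < m, ∃ C : Finset Cell, IsLMMove C (p i) (p (i + 1))) →
      ∀ i ≤ m, (p i).1 ≤ (p 0).1 ∧ (p i).2 ≤ (p 0).1 - (p i).1 + (p 0).2) := by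
  have key : ∀ (C : Finset Cell) (c c' : Cell), IsLMMove C c c' →
      2 * c'.1 + c'.2 ≤ 2 * c.1 + c.2 - 1 ∧ c'.1 ≤ c.1 ∧ c'.1 + c'.2 ≤ c.1 + c.2 := by
    intro C c c' h
    have hd : c' - c = ((0, -1) : Cell) ∨ c' - c = ((-1, 0) : Cell) ∨
        c' - c = ((-1, -1) : Cell) ∨ c' - c = ((-1, 1) : Cell) := by
      rcases h with ⟨_, h⟩ | ⟨_, h⟩ <;> tauto
    rcases hd with h | h | h | h <;>
      · have h1 := congrArg Prod.fst h
        have h2 := congrArg Prod.snd h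
        simp only [Prod.fst_sub, Prod.snd_sub] at h1 h2
        omega
  refine ⟨key, ?_⟩
  intro m p hseq i hi
  induction i with
  | zero => omega
  | succ n ih =>
    obtain ⟨C, hC⟩ := hseq n (by omega)
    have hk := key C (p n) (p (n + 1)) hC
    have ihn := ih (by omega)
    omega
end

section
/- Define the score of a configuration C as d(C) = Σ_{(x,y) ∈ C} (2x + y). Every LM-move decreases d(C) by at least 1, every bottom corner move decreases d(C) by at least 1, and every top corner move decreases d(C) by at least 2. -/

lemma score_apply (C : Finset Cell) (c c' : Cell) (hc : c ∈ C) (hc' : c' ∉ C) :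
    score (ApplyMove C c c') = score C + (2 * c'.1 + c'.2) - (2 * c.1 + c.2) := by
  unfold score ApplyMove
  rw [Finset.sum_insert (by simp [hc']), Finset.sum_erase_eq_sub hc]
  ring

/-- the score `d(C) = Σ (2x + y)` decreases by at least 1 under
LM-moves and bottom corner moves, and by at least 2 under top corner moves. -/
theorem score_decrease :
    (∀ (C : Finset Cell) (c c' : Cell), IsLMMove C c c' →
      score (ApplyMove C c c') ≤ score C - 1) ∧
    (∀ (C : Finset Cell) (σ : List Cell) (q : Cell) (C' : Finset Cell),
      IsBottomCorner C σ q →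
      CornerMoveSeq C q (q + (0, -1)) (q + (1, -1)) (q + (1, 0)) C' →
      score C' ≤ score C - 1) ∧
    (∀ (C : Finset Cell) (σ : List Cell) (q : Cell) (C' : Finset Cell),
      IsTopCorner C σ q →
      CornerMoveSeq C q (q + (0, 1)) (q + (1, 1)) (q + (1, 0)) C' →
      score C' ≤ score C - 2) := by
  refine ⟨?_, ?_, ?_⟩
  · rintro C c c' h
    rcases h with ⟨⟨hc, hc', -⟩, hd⟩ | ⟨⟨hc, hc', -⟩, hd⟩ <;>
    · rw [score_apply C c c' hc hc']
      rcases hd with hd | hd <;>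
      · have h1 : c'.1 - c.1 = (c' - c).1 := rfl
        have h2 : c'.2 - c.2 = (c' - c).2 := rfl
        rw [hd] at h1 h2
        omega
  · rintro C σ q C' hbc ⟨f, hf, ⟨hfC, hqC, -⟩, ⟨hb2, hfnot, -⟩, rfl⟩
    rw [score_apply _ _ _ hb2 hfnot, score_apply _ _ _ hfC hqC]
    simp only [Prod.fst_add, Prod.snd_add]
    omega
  · rintro C σ q C' hbc ⟨f, hf, ⟨hfC, hqC, -⟩, ⟨hb2, hfnot, -⟩, rfl⟩
    rw [score_apply _ _ _ hb2 hfnot, score_apply _ _ _ hfC hqC]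
    simp only [Prod.fst_add, Prod.snd_add]
    omega
end

section
/- Let C and C₂ be xy-monotone configurations with |C| = |C₂| and C ≠ C₂, whose bounding boxes have the same bottom-left corner. Let s be the bottommost cell of C \ C₂ of maximum potential φ(s) = x + y, and let e be the topmost cell of C₂ \ C of minimum potential φ(e) = x + y. Then the configuration (C \ {s}) ∪ {e} is xy-monotone. -/
lemma minX_le' {C : Finset Cell} {q : Cell} (hq : q ∈ C) : minX C ≤ q.1 :=
  csInf_le (Set.Finite.bddBelow ((C.finite_toSet).image _)) ⟨q, hq, rfl⟩

lemma minY_le' {C : Finset Cell} {q : Cell} (hq : q ∈ C) : minY C ≤ q.2 :=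
  csInf_le (Set.Finite.bddBelow ((C.finite_toSet).image _)) ⟨q, hq, rfl⟩

lemma minX_eq' {C : Finset Cell} {a : ℤ} (h1 : ∃ q ∈ C, q.1 = a)
    (h2 : ∀ q ∈ C, a ≤ q.1) : minX C = a := by
  obtain ⟨q, hq, rfl⟩ := h1
  refine le_antisymm (minX_le' hq) (le_csInf ⟨q.1, ⟨q, hq, rfl⟩⟩ ?_)
  rintro x ⟨p, hp, rfl⟩; exact h2 p hp

lemma minY_eq' {C : Finset Cell} {b : ℤ} (h1 : ∃ q ∈ C, q.2 = b)
    (h2 : ∀ q ∈ C, b ≤ q.2) : minY C = b := by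
  obtain ⟨q, hq, rfl⟩ := h1
  refine le_antisymm (minY_le' hq) (le_csInf ⟨q.2, ⟨q, hq, rfl⟩⟩ ?_)
  rintro x ⟨p, hp, rfl⟩; exact h2 p hp

lemma walk_left' {C : Finset Cell} (hm : XYMonotone C) :
    ∀ n : ℕ, ∀ qx qy x : ℤ, ((qx, qy) : Cell) ∈ C → minX C ≤ x → x ≤ qx →
      (qx - x).toNat = n → ((x, qy) : Cell) ∈ C := by
  intro n
  induction n with
  | zero =>
    intro qx qy x hq _ h2 hn
    have : x = qx := by omega
    subst this; exact hq
  | succ n ih =>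
    intro qx qy x hq h1 h2 hn
    have hq' : ((qx - 1, qy) : Cell) ∈ C := (hm _ hq).1 (by simpa using by omega)
    exact ih (qx - 1) qy x hq' h1 (by omega) (by omega)

lemma walk_down' {C : Finset Cell} (hm : XYMonotone C) :
    ∀ n : ℕ, ∀ qx qy y : ℤ, ((qx, qy) : Cell) ∈ C → minY C ≤ y → y ≤ qy →
      (qy - y).toNat = n → ((qx, y) : Cell) ∈ C := by
  intro n
  induction n with
  | zero =>
    intro qx qy y hq _ h2 hn
    have : y = qy := by omega
    subst this; exact hq
  | succ n ih =>
    intro qx qy y hq h1 h2 hn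
    have hq' : ((qx, qy - 1) : Cell) ∈ C := (hm _ hq).2 (by simpa using by omega)
    exact ih qx (qy - 1) y hq' h1 (by omega) (by omega)

lemma corner_mem' {C : Finset Cell} (hC : C.Nonempty) (hm : XYMonotone C) :
    ((minX C, minY C) : Cell) ∈ C := by
  obtain ⟨⟨qx, qy⟩, hq⟩ := hC
  have h1 : ((minX C, qy) : Cell) ∈ C :=
    walk_left' hm _ qx qy (minX C) hq le_rfl (minX_le' hq) rfl
  exact walk_down' hm _ (minX C) qy (minY C) h1 le_rfl (minY_le' h1) rfl

/-- moving the bottommost maximum-potential square of `C \ C₂` to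
the topmost minimum-potential cell of `C₂ \ C` preserves xy-monotonicity. -/
theorem xy_monotone_swap (C C₂ : Finset Cell)
    (hC : C.Nonempty) (hC₂ : C₂.Nonempty)
    (hm : XYMonotone C) (hm₂ : XYMonotone C₂)
    (hcard : C.card = C₂.card) (hne : C ≠ C₂)
    (hx : minX C = minX C₂) (hy : minY C = minY C₂)
    (s : Cell) (hsC : s ∈ C) (hsC₂ : s ∉ C₂)
    (hsmax : ∀ t ∈ C, t ∉ C₂ →
      t.1 + t.2 ≤ s.1 + s.2 ∧ (t.1 + t.2 = s.1 + s.2 → s.2 ≤ t.2))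
    (e : Cell) (heC₂ : e ∈ C₂) (heC : e ∉ C)
    (hemin : ∀ t ∈ C₂, t ∉ C →
      e.1 + e.2 ≤ t.1 + t.2 ∧ (t.1 + t.2 = e.1 + e.2 → t.2 ≤ e.2)) :
    XYMonotone (insert e (C.erase s)) := by
  obtain ⟨sx, sy⟩ := s
  obtain ⟨ex, ey⟩ := e
  have hab : ((minX C, minY C) : Cell) ∈ C := corner_mem' hC hm
  have hab₂ : ((minX C, minY C) : Cell) ∈ C₂ := by
    have := corner_mem' hC₂ hm₂
    rwa [← hx, ← hy] at this
  have hsa : minX C ≤ sx := minX_le' hsC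
  have hsb : minY C ≤ sy := minY_le' hsC
  have hea : minX C ≤ ex := by rw [hx]; exact minX_le' heC₂
  have heb : minY C ≤ ey := by rw [hy]; exact minY_le' heC₂
  -- s has no right or upper neighbor in C
  have hBr : ((sx + 1, sy) : Cell) ∉ C := by
    intro ht
    by_cases ht2 : ((sx + 1, sy) : Cell) ∈ C₂
    · have h3 := (hm₂ _ ht2).1 (by simp only; omega)
      simp only at h3
      have heq : ((sx + 1 - 1, sy) : Cell) = ((sx, sy) : Cell) := by norm_num
      rw [heq] at h3
      exact hsC₂ h3
    · have := (hsmax _ ht ht2).1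
      simp only at this; omega
  have hBu : ((sx, sy + 1) : Cell) ∉ C := by
    intro ht
    by_cases ht2 : ((sx, sy + 1) : Cell) ∈ C₂
    · have h3 := (hm₂ _ ht2).2 (by simp only; omega)
      simp only at h3
      have heq : ((sx, sy + 1 - 1) : Cell) = ((sx, sy) : Cell) := by norm_num
      rw [heq] at h3
      exact hsC₂ h3
    · have := (hsmax _ ht ht2).1
      simp only at this; omega
  -- left and lower neighbors of e belong to C (when inside the box)
  have hCl₂ : minX C ≤ ex - 1 → ((ex - 1, ey) : Cell) ∈ C₂ := fun h =>
    (hm₂ _ heC₂).1 (by simp only; omega)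
  have hCl : minX C ≤ ex - 1 → ((ex - 1, ey) : Cell) ∈ C := by
    intro h
    by_contra hnc
    have := (hemin _ (hCl₂ h) hnc).1
    simp only at this; omega
  have hCd₂ : minY C ≤ ey - 1 → ((ex, ey - 1) : Cell) ∈ C₂ := fun h =>
    (hm₂ _ heC₂).2 (by simp only; omega)
  have hCd : minY C ≤ ey - 1 → ((ex, ey - 1) : Cell) ∈ C := by
    intro h
    by_contra hnc
    have := (hemin _ (hCd₂ h) hnc).1
    simp only at this; omega
  -- s is not the bottom-left corner
  have hs_ne : ((sx, sy) : Cell) ≠ ((minX C, minY C) : Cell) := by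
    intro hseq
    have hsa' : sx = minX C := by simpa using congrArg Prod.fst hseq
    have hsb' : sy = minY C := by simpa using congrArg Prod.snd hseq
    have hsub : ∀ q ∈ C, q = ((sx, sy) : Cell) := by
      rintro ⟨qx, qy⟩ hq
      have hqa : minX C ≤ qx := minX_le' hq
      have hqb : minY C ≤ qy := minY_le' hq
      by_cases hqx : qx = sx
      · subst hqx
        by_cases hqy : qy = sy
        · subst hqy; rfl
        · exfalso
          exact hBu (walk_down' hm _ qx qy (sy + 1) hq (by omega) (by omega) rfl)
      · exfalso
        have h1 : ((sx + 1, qy) : Cell) ∈ C :=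
          walk_left' hm _ qx qy (sx + 1) hq (by omega) (by omega) rfl
        exact hBr (walk_down' hm _ (sx + 1) qy sy h1 (by omega) (by omega) rfl)
    have hCeq : C = {((sx, sy) : Cell)} :=
      Finset.eq_singleton_iff_unique_mem.2 ⟨hsC, hsub⟩
    have hcard2 : C₂.card = 1 := by rw [← hcard, hCeq]; simp
    have hC₂eq : C₂ = {((sx, sy) : Cell)} := by
      obtain ⟨w, hw⟩ := Finset.card_eq_one.1 hcard2
      rw [hw] at hab₂ ⊢
      simp only [Finset.mem_singleton] at hab₂
      rw [← hab₂, hsa', hsb']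
    exact hne (hCeq.trans hC₂eq.symm)
  have habe : ((minX C, minY C) : Cell) ∈
      insert ((ex, ey) : Cell) (C.erase ((sx, sy) : Cell)) :=
    Finset.mem_insert_of_mem (Finset.mem_erase.2 ⟨fun h => hs_ne h.symm, hab⟩)
  -- min coordinates of the new configuration
  have hminX' : minX (insert ((ex, ey) : Cell) (C.erase ((sx, sy) : Cell))) = minX C := by
    apply minX_eq' ⟨_, habe, rfl⟩
    intro q hq
    rcases Finset.mem_insert.1 hq with h | h
    · subst h; exact hea
    · exact minX_le' (Finset.mem_of_mem_erase h)
  have hminY' : minY (insert ((ex, ey) : Cell) (C.erase ((sx, sy) : Cell))) = minY C := by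
    apply minY_eq' ⟨_, habe, rfl⟩
    intro q hq
    rcases Finset.mem_insert.1 hq with h | h
    · subst h; exact heb
    · exact minY_le' (Finset.mem_of_mem_erase h)
  -- main verification
  rintro ⟨qx, qy⟩ hq
  rw [hminX', hminY']
  rcases Finset.mem_insert.1 hq with heq | hqe
  · -- q = e
    have hqx : qx = ex := by simpa using congrArg Prod.fst heq
    have hqy : qy = ey := by simpa using congrArg Prod.snd heq
    subst hqx; subst hqy
    constructor
    · intro h
      refine Finset.mem_insert_of_mem (Finset.mem_erase.2 ⟨?_, hCl h⟩)
      intro hcontra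
      exact hsC₂ (hcontra ▸ hCl₂ h)
    · intro h
      refine Finset.mem_insert_of_mem (Finset.mem_erase.2 ⟨?_, hCd h⟩)
      intro hcontra
      exact hsC₂ (hcontra ▸ hCd₂ h)
  · -- q ∈ C.erase s
    obtain ⟨hqs, hqC⟩ := Finset.mem_erase.1 hqe
    constructor
    · intro h
      have hmem : ((qx - 1, qy) : Cell) ∈ C := (hm _ hqC).1 h
      refine Finset.mem_insert_of_mem (Finset.mem_erase.2 ⟨?_, hmem⟩)
      intro hcontra
      have h1 : qx - 1 = sx := by simpa using congrArg Prod.fst hcontra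
      have h2 : qy = sy := by simpa using congrArg Prod.snd hcontra
      apply hBr
      have heq2 : ((sx + 1, sy) : Cell) = ((qx, qy) : Cell) := by rw [← h1, ← h2]; norm_num
      rw [heq2]; exact hqC
    · intro h
      have hmem : ((qx, qy - 1) : Cell) ∈ C := (hm _ hqC).2 h
      refine Finset.mem_insert_of_mem (Finset.mem_erase.2 ⟨?_, hmem⟩)
      intro hcontra
      have h1 : qx = sx := by simpa using congrArg Prod.fst hcontra
      have h2 : qy - 1 = sy := by simpa using congrArg Prod.snd hcontra
      apply hBu
      have heq2 : ((sx, sy + 1) : Cell) = ((qx, qy) : Cell) := by rw [← h1, ← h2]; norm_num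
      rw [heq2]; exact hqC
end
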